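/- arXiv:2108.00260 — 3 statements merged into one kernel-verified Lean document; each statement's English description precedes it below -/
import Mathlib

section
/- Let J ⊆ I be of infinite type (W_J infinite) and stable under an involutive root-system isometry σ of V_J, and suppose the fixed space (V_J)^σ is 1-dimensional. Then (β, β) ≤ 0 for every nonzero β of the form (λ + σ(λ))/2 with λ ∈ Φ_J. -/
open scoped BigOperators

namespace KMStmt

variable {I : Type}

/-- The simple root `α i`, as an element of the root lattice realized inside `I → ℚ`. -/
noncomputable def sr [DecidableEq I] (i : I) : I → ℚ := Pi.single i 1

/-- `A` is a generalized Cartan matrix. -/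
def IsGCM [Fintype I] (A : I → I → ℤ) : Prop :=
  (∀ i, A i i = 2) ∧ (∀ i j, i ≠ j → A i j ≤ 0) ∧ (∀ i j, A i j = 0 → A j i = 0)

/-- `s` realizes the simple reflections on the root lattice:
`s i v = v - ⟨v, αᵢ^∨⟩ αᵢ`, where `⟨α j, αᵢ^∨⟩ = A i j`. -/
def IsReflRep [Fintype I] [DecidableEq I] (A : I → I → ℤ)
    (s : I → ((I → ℚ) ≃ₗ[ℚ] (I → ℚ))) : Prop :=
  ∀ i v, s i v = v - (∑ j, v j * (A i j : ℚ)) • sr i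

/-- The Weyl group, as a subgroup of the linear automorphisms of the root space. -/
def Wgrp [Fintype I] [DecidableEq I] (s : I → ((I → ℚ) ≃ₗ[ℚ] (I → ℚ))) :
    Subgroup ((I → ℚ) ≃ₗ[ℚ] (I → ℚ)) := Subgroup.closure (Set.range s)

/-- The (standard) parabolic subgroup `W_X` generated by the reflections `s i`, `i ∈ X`. -/
def Wpara [Fintype I] [DecidableEq I] (s : I → ((I → ℚ) ≃ₗ[ℚ] (I → ℚ))) (X : Set I) :
    Subgroup ((I → ℚ) ≃ₗ[ℚ] (I → ℚ)) := Subgroup.closure (s '' X)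

/-- The nonnegative cone `Q⁺` of the root lattice. -/
def Qplus [Fintype I] : Set (I → ℚ) := {v | ∀ j, ∃ n : ℕ, v j = (n : ℚ)}

/-- The projection `λ ↦ λ̄ = (λ + σ(λ))/2` onto the `σ`-fixed subspace. -/
noncomputable def bar [Fintype I] (σ : (I → ℚ) → (I → ℚ)) (v : I → ℚ) : I → ℚ :=
  (2⁻¹ : ℚ) • (v + σ v)

/-- `σ = w_X ∘ τ` as a map on the root space. -/
def σmap [Fintype I] (wX tV : (I → ℚ) ≃ₗ[ℚ] (I → ℚ)) : (I → ℚ) → (I → ℚ) :=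
  fun v => wX (tV v)

/-- `(X, τ)` is a compatible decoration, with `tV` the action of `τ` on the root space and
`wX` the longest element of the (finite) parabolic subgroup `W_X`:
`τ` is an involutive diagram automorphism of `A` stabilizing `X`, `X` is of finite type,
and `τ|_X` is the opposition involution of `X` (i.e. `w_X (α i) = -α (τ i)` for `i ∈ X`). -/
def IsCompatibleDec [Fintype I] [DecidableEq I] (A : I → I → ℤ)
    (s : I → ((I → ℚ) ≃ₗ[ℚ] (I → ℚ))) (X : Set I) (τ : Equiv.Perm I)
    (tV wX : (I → ℚ) ≃ₗ[ℚ] (I → ℚ)) : Prop :=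
  (∀ i j, A (τ i) (τ j) = A i j) ∧ (∀ i, τ (τ i) = i) ∧ (∀ i ∈ X, τ i ∈ X) ∧
  (∀ i, tV (sr i) = sr (τ i)) ∧
  Finite (Wpara s X) ∧ wX ∈ Wpara s X ∧ wX * wX = 1 ∧
  (∀ i ∈ X, wX (sr i) = - sr (τ i))

/-- `(X, τ)` is a generalized Satake diagram: (it is a compatible decoration and) there is no
`i ∈ I \ X` with `τ i = i` whose connected component in `X ∪ {i}` is of type `A₂`. -/
def IsGSat [Fintype I] (A : I → I → ℤ) (X : Set I) (τ : Equiv.Perm I) : Prop :=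
  ¬ ∃ i, i ∉ X ∧ τ i = i ∧ ∃ j ∈ X, A i j = -1 ∧ A j i = -1 ∧
      ∀ k ∈ X, k ≠ j → A i k = 0 ∧ A j k = 0

/-- `B` is the invariant symmetric bilinear form, with symmetrizers `ε`. -/
def IsInvForm [Fintype I] [DecidableEq I] (A : I → I → ℤ) (ε : I → ℚ)
    (B : (I → ℚ) →ₗ[ℚ] (I → ℚ) →ₗ[ℚ] ℚ)
    (s : I → ((I → ℚ) ≃ₗ[ℚ] (I → ℚ))) : Prop :=
  (∀ i, 0 < ε i) ∧ (∀ u v, B u v = B v u) ∧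
  (∀ i j, B (sr i) (sr j) = ε i * (A i j : ℚ)) ∧
  (∀ i u v, B (s i u) (s i v) = B u v)

/-- `Φ` is the root system: it contains the simple roots, is stable under the simple
reflections and under negation, does not contain `0`, and every root is positive or
negative. -/
def IsRootSystem [Fintype I] [DecidableEq I]
    (s : I → ((I → ℚ) ≃ₗ[ℚ] (I → ℚ))) (Φ : Set (I → ℚ)) : Prop :=
  (∀ i, sr i ∈ Φ) ∧ (0 ∉ Φ) ∧ (∀ v ∈ Φ, v ∈ (Qplus : Set (I → ℚ)) ∨ -v ∈ (Qplus : Set (I → ℚ))) ∧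
  (∀ i, ∀ v ∈ Φ, s i v ∈ Φ) ∧ (∀ v ∈ Φ, -v ∈ Φ)

/-- The orthogonal reflection `s_β : v ↦ v - 2 (β, v)/(β, β) β`, as an endomorphism. -/
noncomputable def reflMap [Fintype I] (B : (I → ℚ) →ₗ[ℚ] (I → ℚ) →ₗ[ℚ] ℚ)
    (β : I → ℚ) : Module.End ℚ (I → ℚ) :=
  LinearMap.id - (B β).smulRight ((2 / B β β) • β)

/-- `Istar` is a set of representatives of the `τ`-orbits on `I \ X`. -/
def IsOrbitReps [Fintype I] [DecidableEq I] (X : Finset I) (τ : Equiv.Perm I)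
    (Istar : Finset I) : Prop :=
  (∀ i ∈ Istar, i ∉ X) ∧ (∀ i, i ∉ X → i ∈ Istar ∨ τ i ∈ Istar) ∧
  (∀ i ∈ Istar, τ i ∈ Istar → τ i = i)

/-- The restricted root system `Φ̄ = { λ̄ : λ ∈ Φ } \ {0}`. -/
noncomputable def restRoots [Fintype I] (σ : (I → ℚ) → (I → ℚ)) (Φ : Set (I → ℚ)) :
    Set (I → ℚ) := {u | u ≠ 0 ∧ ∃ l ∈ Φ, u = bar σ l}


section Aux

variable {I : Type} [Fintype I] [DecidableEq I]

lemma sr_apply (i k : I) : sr i k = if k = i then 1 else 0 := Pi.single_apply i 1 k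

lemma sr_self (i : I) : sr i i = (1 : ℚ) := by rw [sr_apply, if_pos rfl]

lemma sr_ne (i : I) : sr i ≠ (0 : I → ℚ) := by
  intro h
  have := congrFun h i
  rw [sr_self] at this
  exact one_ne_zero this

lemma expand (v : I → ℚ) : v = ∑ i, v i • sr i := by
  funext k
  rw [Finset.sum_apply]
  rw [Finset.sum_eq_single k (fun b _ hb => by
      rw [Pi.smul_apply, smul_eq_mul, sr_apply, if_neg (Ne.symm hb), mul_zero])
    (fun h => absurd (Finset.mem_univ k) h)]
  rw [Pi.smul_apply, smul_eq_mul, sr_self, mul_one]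

lemma lin_apply (e : (I → ℚ) ≃ₗ[ℚ] (I → ℚ)) (v : I → ℚ) :
    e v = ∑ i, v i • e (sr i) := by
  conv_lhs => rw [expand v]
  rw [map_sum]
  simp only [map_smul]

lemma fix_of_fix_sr {e : (I → ℚ) ≃ₗ[ℚ] (I → ℚ)} {S : Set I}
    (h : ∀ i ∈ S, e (sr i) = sr i) {v : I → ℚ} (hv : ∀ k, k ∉ S → v k = 0) :
    e v = v := by
  rw [lin_apply]
  conv_rhs => rw [expand v]
  refine Finset.sum_congr rfl fun i _ => ?_
  by_cases hi : i ∈ S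
  · rw [h i hi]
  · rw [hv i hi, zero_smul, zero_smul]


lemma apply_inv_apply (x : (I → ℚ) ≃ₗ[ℚ] (I → ℚ)) (v : I → ℚ) :
    x ((x⁻¹ : (I → ℚ) ≃ₗ[ℚ] (I → ℚ)) v) = v := x.apply_symm_apply v

lemma inv_apply_apply (x : (I → ℚ) ≃ₗ[ℚ] (I → ℚ)) (v : I → ℚ) :
    (x⁻¹ : (I → ℚ) ≃ₗ[ℚ] (I → ℚ)) (x v) = v := x.symm_apply_apply v

variable {A : I → I → ℤ} {s : I → ((I → ℚ) ≃ₗ[ℚ] (I → ℚ))} {ε : I → ℚ}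
  {B : (I → ℚ) →ₗ[ℚ] (I → ℚ) →ₗ[ℚ] ℚ} {τ : Equiv.Perm I}
  {tV wX : (I → ℚ) ≃ₗ[ℚ] (I → ℚ)}

lemma sum_sr_mul (i : I) (f : I → ℚ) : ∑ j, sr i j * f j = f i := by
  rw [Finset.sum_eq_single i (fun b _ hb => by rw [sr_apply, if_neg hb, zero_mul])
    (fun h => absurd (Finset.mem_univ i) h)]
  rw [sr_self, one_mul]

lemma s_apply (hs : IsReflRep A s) (i : I) (v : I → ℚ) (k : I) :
    s i v k = v k - (∑ j, v j * (A i j : ℚ)) * sr i k := by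
  rw [hs i v]
  simp

lemma s_sr_self (hA : IsGCM A) (hs : IsReflRep A s) (i : I) : s i (sr i) = - sr i := by
  rw [hs i (sr i), sum_sr_mul]
  have h2 : ((A i i : ℤ) : ℚ) = 2 := by rw [hA.1 i]; norm_num
  rw [h2]
  funext k
  simp only [Pi.sub_apply, Pi.smul_apply, Pi.neg_apply, smul_eq_mul]
  ring

lemma s_invol (hA : IsGCM A) (hs : IsReflRep A s) (i : I) (v : I → ℚ) :
    s i (s i v) = v := by
  have hc : ∑ j, s i v j * (A i j : ℚ) = - ∑ j, v j * (A i j : ℚ) := by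
    have : ∀ j, s i v j * (A i j : ℚ)
        = v j * (A i j : ℚ) - (∑ m, v m * (A i m : ℚ)) * (sr i j * (A i j : ℚ)) := by
      intro j
      rw [s_apply hs]
      ring
    rw [Finset.sum_congr rfl fun j _ => this j, Finset.sum_sub_distrib, ← Finset.mul_sum,
      sum_sr_mul]
    have h2 : ((A i i : ℤ) : ℚ) = 2 := by rw [hA.1 i]; norm_num
    rw [h2]
    ring
  rw [hs i (s i v), hc, hs i v]
  funext k
  simp only [Pi.sub_apply, Pi.smul_apply, Pi.neg_apply, smul_eq_mul, neg_mul]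
  ring

lemma s_mem_wpara {S : Set I} {i : I} (hi : i ∈ S) : s i ∈ Wpara s S :=
  Subgroup.subset_closure ⟨i, hi, rfl⟩

lemma wpara_shift (hs : IsReflRep A s) {S : Set I}
    {w : (I → ℚ) ≃ₗ[ℚ] (I → ℚ)} (hw : w ∈ Wpara s S) :
    ∀ v k, k ∉ S → w v k = v k := by
  have hw' : w ∈ Subgroup.closure (s '' S) := hw
  refine Subgroup.closure_induction
    (p := fun g _ => ∀ v k, k ∉ S → g v k = v k) ?_ ?_ ?_ ?_ hw'
  · rintro x ⟨i, hi, rfl⟩ v k hk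
    rw [s_apply hs, sr_apply, if_neg (fun h => hk (by rw [h]; exact hi)), mul_zero, sub_zero]
  · intro v k _
    rfl
  · intro x y _ _ px py v k hk
    show x (y v) k = v k
    rw [px (y v) k hk, py v k hk]
  · intro x _ px v k hk
    have h1 := px ((x⁻¹ : (I → ℚ) ≃ₗ[ℚ] (I → ℚ)) v) k hk
    rw [apply_inv_apply] at h1
    exact h1.symm

lemma wpara_B (hB4 : ∀ i u v, B (s i u) (s i v) = B u v) {S : Set I}
    {w : (I → ℚ) ≃ₗ[ℚ] (I → ℚ)} (hw : w ∈ Wpara s S) :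
    ∀ u v, B (w u) (w v) = B u v := by
  have hw' : w ∈ Subgroup.closure (s '' S) := hw
  refine Subgroup.closure_induction
    (p := fun g _ => ∀ u v, B (g u) (g v) = B u v) ?_ ?_ ?_ ?_ hw'
  · rintro x ⟨i, _, rfl⟩ u v
    exact hB4 i u v
  · intro u v
    rfl
  · intro x y _ _ px py u v
    show B (x (y u)) (x (y v)) = B u v
    rw [px (y u) (y v), py u v]
  · intro x _ px u v
    have h1 := px ((x⁻¹ : (I → ℚ) ≃ₗ[ℚ] (I → ℚ)) u) ((x⁻¹ : (I → ℚ) ≃ₗ[ℚ] (I → ℚ)) v)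
    rw [apply_inv_apply, apply_inv_apply] at h1
    exact h1.symm

lemma wpara_int (hA : IsGCM A) (hs : IsReflRep A s) {S : Set I}
    {w : (I → ℚ) ≃ₗ[ℚ] (I → ℚ)} (hw : w ∈ Wpara s S) :
    ∀ v : I → ℚ, (∀ k, ∃ z : ℤ, v k = (z : ℚ)) ↔ (∀ k, ∃ z : ℤ, w v k = (z : ℚ)) := by
  have hgen : ∀ i (v : I → ℚ), (∀ k, ∃ z : ℤ, v k = z) → (∀ k, ∃ z : ℤ, s i v k = z) := by
    intro i v hv k
    choose z hz using hv
    refine ⟨z k - (∑ j, z j * A i j) * (if k = i then 1 else 0), ?_⟩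
    rw [s_apply hs, sr_apply]
    have hsum : (∑ j, v j * (A i j : ℚ)) = ((∑ j, z j * A i j : ℤ) : ℚ) := by
      push_cast
      exact Finset.sum_congr rfl fun j _ => by rw [hz j]
    rw [hz k, hsum]
    push_cast
    split <;> norm_num
  have hw' : w ∈ Subgroup.closure (s '' S) := hw
  refine Subgroup.closure_induction
    (p := fun g _ => ∀ v : I → ℚ, (∀ k, ∃ z : ℤ, v k = (z : ℚ)) ↔ (∀ k, ∃ z : ℤ, g v k = (z : ℚ)))
    ?_ ?_ ?_ ?_ hw'
  · rintro x ⟨i, _, rfl⟩ v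
    constructor
    · exact hgen i v
    · intro h
      have h2 := hgen i (s i v) h
      intro k
      have := h2 k
      rwa [s_invol hA hs] at this
  · intro v
    exact Iff.rfl
  · intro x y _ _ px py v
    exact (py v).trans (px (y v))
  · intro x _ px v
    have h1 := px ((x⁻¹ : (I → ℚ) ≃ₗ[ℚ] (I → ℚ)) v)
    rw [apply_inv_apply] at h1
    exact h1.symm

end Aux
section Aux2

variable {I : Type} [Fintype I] [DecidableEq I]
variable {A : I → I → ℤ} {s : I → ((I → ℚ) ≃ₗ[ℚ] (I → ℚ))} {ε : I → ℚ}
  {B : (I → ℚ) →ₗ[ℚ] (I → ℚ) →ₗ[ℚ] ℚ} {τ : Equiv.Perm I}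
  {tV wX : (I → ℚ) ≃ₗ[ℚ] (I → ℚ)}

lemma B_row (hB : IsInvForm A ε B s) (a : I) (v : I → ℚ) :
    B (sr a) v = ε a * ∑ b, v b * (A a b : ℚ) := by
  conv_lhs => rw [expand v]
  rw [map_sum]
  simp only [map_smul, smul_eq_mul, hB.2.2.1]
  rw [Finset.mul_sum]
  exact Finset.sum_congr rfl fun b _ => by ring

lemma B_left_expand (hB : IsInvForm A ε B s) (u v : I → ℚ) :
    B u v = ∑ a, u a * B (sr a) v := by
  conv_lhs => rw [expand u]
  rw [map_sum]
  simp only [LinearMap.sum_apply, LinearMap.smul_apply, map_smul, smul_eq_mul]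

lemma pair_nonpos (hB : IsInvForm A ε B s)
    {μ ν : I → ℚ} (hμ : ∀ k, 0 ≤ μ k) (hν : ∀ i, ∑ j, ν j * (A i j : ℚ) ≤ 0) :
    B μ ν ≤ 0 := by
  rw [B_left_expand hB]
  apply Finset.sum_nonpos
  intro a _
  have h1 : B (sr a) ν ≤ 0 := by
    rw [B_row hB]
    exact mul_nonpos_iff.mpr (Or.inl ⟨le_of_lt (hB.1 a), hν a⟩)
  exact mul_nonpos_iff.mpr (Or.inl ⟨hμ a, h1⟩)

lemma kac_global (hA : IsGCM A) {J : Set I} {lam : I → ℚ}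
    (h0 : ∀ k, 0 ≤ lam k) (hsupp : ∀ k, k ∉ J → lam k = 0)
    (hJ : ∀ i ∈ J, ∑ j, lam j * (A i j : ℚ) ≤ 0) :
    ∀ i, ∑ j, lam j * (A i j : ℚ) ≤ 0 := by
  intro i
  by_cases hi : i ∈ J
  · exact hJ i hi
  · apply Finset.sum_nonpos
    intro j _
    by_cases hj : lam j = 0
    · rw [hj, zero_mul]
    · have hjJ : j ∈ J := by
        by_contra hc
        exact hj (hsupp j hc)
      have hne : j ≠ i := fun h => hi (h ▸ hjJ)
      have hAij : (A i j : ℚ) ≤ 0 := by exact_mod_cast hA.2.1 i j (Ne.symm hne)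
      exact mul_nonpos_iff.mpr (Or.inl ⟨h0 j, hAij⟩)

/-! ### The averaged dot product over a finite parabolic subgroup -/

def dotQ (u v : I → ℚ) : ℚ := ∑ k, u k * v k

lemma dotQ_comm (u v : I → ℚ) : dotQ u v = dotQ v u :=
  Finset.sum_congr rfl fun k _ => mul_comm _ _

lemma dotQ_nonneg (v : I → ℚ) : 0 ≤ dotQ v v :=
  Finset.sum_nonneg fun k _ => mul_self_nonneg _

lemma dotQ_eq_zero {v : I → ℚ} (h : dotQ v v ≤ 0) : v = 0 := by
  funext k
  by_contra hk
  have h1 : 0 < v k * v k := mul_self_pos.mpr hk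
  have h2 : v k * v k ≤ dotQ v v :=
    Finset.single_le_sum (fun i _ => mul_self_nonneg (v i)) (Finset.mem_univ k)
  linarith

lemma dotQ_sub_left (x y z : I → ℚ) : dotQ (x - y) z = dotQ x z - dotQ y z := by
  simp [dotQ, sub_mul, Finset.sum_sub_distrib]

lemma dotQ_smul_left (c : ℚ) (x z : I → ℚ) : dotQ (c • x) z = c * dotQ x z := by
  simp [dotQ, Finset.mul_sum, mul_assoc]

lemma dotQ_neg_right (x z : I → ℚ) : dotQ x (-z) = - dotQ x z := by
  simp [dotQ, mul_neg, Finset.sum_neg_distrib]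

lemma dotQ_sum_left (c : I → ℚ) (f : I → (I → ℚ)) (z : I → ℚ) :
    dotQ (∑ a, c a • f a) z = ∑ a, c a * dotQ (f a) z := by
  unfold dotQ
  calc ∑ k, (∑ a, c a • f a) k * z k
      = ∑ k, ∑ a, c a * (f a k * z k) := by
        refine Finset.sum_congr rfl fun k _ => ?_
        rw [Finset.sum_apply, Finset.sum_mul]
        exact Finset.sum_congr rfl fun a _ => by simp [mul_assoc]
    _ = ∑ a, ∑ k, c a * (f a k * z k) := Finset.sum_comm
    _ = ∑ a, c a * ∑ k, f a k * z k := by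
        refine Finset.sum_congr rfl fun a _ => ?_
        rw [Finset.mul_sum]

noncomputable def Dform (W : Subgroup ((I → ℚ) ≃ₗ[ℚ] (I → ℚ))) [Fintype W]
    (u v : I → ℚ) : ℚ :=
  ∑ w : W, dotQ (w.1 u) (w.1 v)

lemma Dform_comm (W : Subgroup ((I → ℚ) ≃ₗ[ℚ] (I → ℚ))) [Fintype W] (u v : I → ℚ) :
    Dform W u v = Dform W v u :=
  Finset.sum_congr rfl fun w _ => dotQ_comm _ _

lemma dot_le_Dform (W : Subgroup ((I → ℚ) ≃ₗ[ℚ] (I → ℚ))) [Fintype W] (v : I → ℚ) :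
    dotQ v v ≤ Dform W v v := by
  have h1 : dotQ ((1 : W).1 v) ((1 : W).1 v) = dotQ v v := rfl
  calc dotQ v v = dotQ ((1 : W).1 v) ((1 : W).1 v) := h1.symm
    _ ≤ Dform W v v :=
        Finset.single_le_sum (fun w _ => dotQ_nonneg _) (Finset.mem_univ (1 : W))

lemma Dform_zero {W : Subgroup ((I → ℚ) ≃ₗ[ℚ] (I → ℚ))} [Fintype W] {v : I → ℚ}
    (h : Dform W v v ≤ 0) : v = 0 :=
  dotQ_eq_zero (le_trans (dot_le_Dform W v) h)

lemma Dform_inv (W : Subgroup ((I → ℚ) ≃ₗ[ℚ] (I → ℚ))) [Fintype W]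
    {w₀ : (I → ℚ) ≃ₗ[ℚ] (I → ℚ)} (h : w₀ ∈ W) (u v : I → ℚ) :
    Dform W (w₀ u) (w₀ v) = Dform W u v := by
  unfold Dform
  exact Fintype.sum_equiv (Equiv.mulRight (⟨w₀, h⟩ : W)) _ _ (fun x => rfl)

lemma Dform_sub_left (W : Subgroup ((I → ℚ) ≃ₗ[ℚ] (I → ℚ))) [Fintype W]
    (x y z : I → ℚ) : Dform W (x - y) z = Dform W x z - Dform W y z := by
  unfold Dform
  rw [← Finset.sum_sub_distrib]
  refine Finset.sum_congr rfl fun w _ => ?_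
  rw [map_sub, dotQ_sub_left]

lemma Dform_smul_left (W : Subgroup ((I → ℚ) ≃ₗ[ℚ] (I → ℚ))) [Fintype W]
    (c : ℚ) (x z : I → ℚ) : Dform W (c • x) z = c * Dform W x z := by
  unfold Dform
  rw [Finset.mul_sum]
  refine Finset.sum_congr rfl fun w _ => ?_
  rw [map_smul, dotQ_smul_left]

lemma Dform_neg_right (W : Subgroup ((I → ℚ) ≃ₗ[ℚ] (I → ℚ))) [Fintype W]
    (x z : I → ℚ) : Dform W x (-z) = - Dform W x z := by
  unfold Dform
  rw [← Finset.sum_neg_distrib]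
  refine Finset.sum_congr rfl fun w _ => ?_
  rw [map_neg, dotQ_neg_right]

lemma Dform_left_expand (W : Subgroup ((I → ℚ) ≃ₗ[ℚ] (I → ℚ))) [Fintype W]
    (u v : I → ℚ) : Dform W u v = ∑ a, u a * Dform W (sr a) v := by
  unfold Dform
  have h1 : ∀ w : W, dotQ (w.1 u) (w.1 v) = ∑ a, u a * dotQ (w.1 (sr a)) (w.1 v) := by
    intro w
    conv_lhs => rw [lin_apply w.1 u]
    exact dotQ_sum_left _ _ _
  rw [Finset.sum_congr rfl fun w _ => h1 w, Finset.sum_comm]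
  exact Finset.sum_congr rfl fun a _ => (Finset.mul_sum _ _ _).symm

lemma Dform_sr_pos (W : Subgroup ((I → ℚ) ≃ₗ[ℚ] (I → ℚ))) [Fintype W] (i : I) :
    0 < Dform W (sr i) (sr i) := by
  by_contra h
  push_neg at h
  exact sr_ne i (Dform_zero h)

lemma refl_ident (hA : IsGCM A) (hs : IsReflRep A s) {X : Set I}
    [Fintype (Wpara s X)] {i : I} (hi : i ∈ X) (v : I → ℚ) :
    2 * Dform (Wpara s X) v (sr i)
      = (∑ j, v j * (A i j : ℚ)) * Dform (Wpara s X) (sr i) (sr i) := by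
  have hmem : s i ∈ Wpara s X := s_mem_wpara hi
  have h1 : Dform (Wpara s X) (s i v) (s i (sr i)) = Dform (Wpara s X) v (sr i) :=
    Dform_inv _ hmem _ _
  rw [s_sr_self hA hs, Dform_neg_right, hs i v, Dform_sub_left, Dform_smul_left] at h1
  linarith

lemma negpart (hA : IsGCM A) (hs : IsReflRep A s) {X : Set I}
    [Fintype (Wpara s X)] {q : I → ℚ}
    (hq0 : ∀ k, 0 ≤ q k) (hqs : ∀ k, k ∉ X → q k = 0)
    (hrow : ∀ i ∈ X, q i ≠ 0 → ∑ j, q j * (A i j : ℚ) ≤ 0) : q = 0 := by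
  apply Dform_zero (W := Wpara s X)
  rw [Dform_left_expand]
  apply Finset.sum_nonpos
  intro a _
  by_cases hqa : q a = 0
  · rw [hqa, zero_mul]
  · have haX : a ∈ X := by
      by_contra hc
      exact hqa (hqs a hc)
    have hD : Dform (Wpara s X) (sr a) q ≤ 0 := by
      have h2 := refl_ident hA hs haX q
      have hd := Dform_sr_pos (Wpara s X) a
      have hr := hrow a haX hqa
      rw [Dform_comm]
      nlinarith
    exact mul_nonpos_iff.mpr (Or.inl ⟨hq0 a, hD⟩)

end Aux2
section Aux3

variable {I : Type} [Fintype I] [DecidableEq I]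
variable {A : I → I → ℤ} {s : I → ((I → ℚ) ≃ₗ[ℚ] (I → ℚ))} {ε : I → ℚ}
  {B : (I → ℚ) →ₗ[ℚ] (I → ℚ) →ₗ[ℚ] ℚ} {τ : Equiv.Perm I}
  {tV wX : (I → ℚ) ≃ₗ[ℚ] (I → ℚ)}

lemma wX_nonneg (hA : IsGCM A) (hs : IsReflRep A s) {X : Set I}
    [Fintype (Wpara s X)]
    (hwXmem : wX ∈ Wpara s X) (hwX2 : wX * wX = 1)
    (hopp : ∀ i ∈ X, wX (sr i) = - sr (τ i)) (hτX : ∀ i ∈ X, τ i ∈ X)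
    {ν : I → ℚ} (hν0 : ∀ k, 0 ≤ ν k) (hrow : ∀ i, ∑ j, ν j * (A i j : ℚ) ≤ 0) :
    ∀ k, 0 ≤ wX ν k := by
  classical
  have hshift : ∀ v k, k ∉ X → wX v k = v k := wpara_shift hs hwXmem
  have hwXwX : ∀ x : I → ℚ, wX (wX x) = x := by
    intro x
    have h := congrFun (congrArg (fun (e : (I → ℚ) ≃ₗ[ℚ] (I → ℚ)) => (e : (I → ℚ) → (I → ℚ))) hwX2) x
    exact h
  have hrowη : ∀ i ∈ X, 0 ≤ ∑ j, wX ν j * (A i j : ℚ) := by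
    intro i hi
    have hτi : τ i ∈ X := hτX i hi
    have e2 : Dform (Wpara s X) (wX ν) (sr i) = Dform (Wpara s X) ν (wX (sr i)) := by
      have h := Dform_inv (Wpara s X) hwXmem ν (wX (sr i))
      rw [hwXwX] at h
      exact h
    have e1 : Dform (Wpara s X) (wX ν) (sr i) = - Dform (Wpara s X) ν (sr (τ i)) := by
      rw [e2, hopp i hi, Dform_neg_right]
    have r1 := refl_ident hA hs hi (wX ν)
    have r2 := refl_ident hA hs hτi ν
    have d1 := Dform_sr_pos (Wpara s X) i
    have d2 := Dform_sr_pos (Wpara s X) (τ i)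
    have hr := hrow (τ i)
    have hDν : Dform (Wpara s X) ν (sr (τ i)) ≤ 0 := by nlinarith
    have hDη : 0 ≤ Dform (Wpara s X) (wX ν) (sr i) := by rw [e1]; linarith
    nlinarith
  set q : I → ℚ := fun k => if k ∈ X then max (-(wX ν k)) 0 else 0 with hqdef
  have hq0 : ∀ k, 0 ≤ q k := by
    intro k
    simp only [hqdef]
    by_cases h : k ∈ X
    · rw [if_pos h]; exact le_max_right _ _
    · rw [if_neg h]
  have hqs : ∀ k, k ∉ X → q k = 0 := by
    intro k h
    simp only [hqdef]
    rw [if_neg h]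
  have hp0 : ∀ k, 0 ≤ wX ν k + q k := by
    intro k
    simp only [hqdef]
    by_cases h : k ∈ X
    · rw [if_pos h]
      have h1 : -(wX ν k) ≤ max (-(wX ν k)) 0 := le_max_left _ _
      linarith
    · rw [if_neg h, add_zero, hshift ν k h]
      exact hν0 k
  have hqrow : ∀ i ∈ X, q i ≠ 0 → ∑ j, q j * (A i j : ℚ) ≤ 0 := by
    intro i hi hqi
    have hηi : wX ν i < 0 := by
      by_contra hc
      push_neg at hc
      apply hqi
      simp only [hqdef]
      rw [if_pos hi]
      exact max_eq_right (neg_nonpos.mpr hc)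
    have hpi : wX ν i + q i = 0 := by
      simp only [hqdef]
      rw [if_pos hi, max_eq_left (le_of_lt (neg_pos.mpr hηi))]
      ring
    have hsplit : ∑ j, q j * (A i j : ℚ)
        = ∑ j, (wX ν j + q j) * (A i j : ℚ) - ∑ j, wX ν j * (A i j : ℚ) := by
      rw [← Finset.sum_sub_distrib]
      exact Finset.sum_congr rfl fun j _ => by ring
    rw [hsplit]
    have h1 : ∑ j, (wX ν j + q j) * (A i j : ℚ) ≤ 0 := by
      apply Finset.sum_nonpos
      intro j _
      rcases eq_or_ne j i with rfl | hji
      · rw [hpi, zero_mul]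
      · have hAij : (A i j : ℚ) ≤ 0 := by exact_mod_cast hA.2.1 i j (Ne.symm hji)
        exact mul_nonpos_iff.mpr (Or.inl ⟨hp0 j, hAij⟩)
    linarith [hrowη i hi]
  have hq := negpart hA hs hq0 hqs hqrow
  intro k
  by_cases h : k ∈ X
  · have hk : q k = 0 := by rw [hq]; rfl
    simp only [hqdef] at hk
    rw [if_pos h] at hk
    have : -(wX ν k) ≤ 0 := by
      by_contra hc
      push_neg at hc
      rw [max_eq_left (le_of_lt hc)] at hk
      linarith
    linarith
  · rw [hshift ν k h]
    exact hν0 k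

lemma tV_apply (htv : ∀ i, tV (sr i) = sr (τ i)) (hτ2 : ∀ i, τ (τ i) = i)
    (v : I → ℚ) (k : I) : tV v k = v (τ k) := by
  rw [lin_apply tV v, Finset.sum_apply]
  rw [Finset.sum_eq_single (τ k) (fun b _ hb => by
      rw [htv, Pi.smul_apply, smul_eq_mul, sr_apply, if_neg, mul_zero]
      intro hc
      apply hb
      rw [hc, hτ2])
    (fun h => absurd (Finset.mem_univ _) h)]
  rw [htv, Pi.smul_apply, smul_eq_mul, hτ2, sr_self, mul_one]

lemma tV_tV (htv : ∀ i, tV (sr i) = sr (τ i)) (hτ2 : ∀ i, τ (τ i) = i)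
    (v : I → ℚ) : tV (tV v) = v := by
  funext k
  rw [tV_apply htv hτ2, tV_apply htv hτ2, hτ2]

lemma tV_sq (htv : ∀ i, tV (sr i) = sr (τ i)) (hτ2 : ∀ i, τ (τ i) = i) :
    tV * tV = 1 := by
  apply LinearEquiv.toLinearMap_injective
  apply LinearMap.ext
  intro v
  exact tV_tV htv hτ2 v

lemma conj_s (hcdA : ∀ i j, A (τ i) (τ j) = A i j) (hτ2 : ∀ i, τ (τ i) = i)
    (htv : ∀ i, tV (sr i) = sr (τ i)) (hs : IsReflRep A s) (i : I) :
    tV * s i * tV = s (τ i) := by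
  apply LinearEquiv.toLinearMap_injective
  apply LinearMap.ext
  intro v
  show tV (s i (tV v)) = s (τ i) v
  funext k
  rw [tV_apply htv hτ2, s_apply hs, tV_apply htv hτ2, hτ2, s_apply hs]
  have hc : ∑ j, tV v j * (A i j : ℚ) = ∑ j, v j * (A (τ i) j : ℚ) := by
    refine Fintype.sum_equiv τ _ _ ?_
    intro j
    rw [tV_apply htv hτ2]
    congr 1
    have : A (τ i) (τ j) = A i j := hcdA i j
    exact_mod_cast this.symm
  rw [hc]
  have hsr : sr i (τ k) = sr (τ i) k := by
    rw [sr_apply, sr_apply]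
    by_cases h : k = τ i
    · rw [if_pos h, if_pos (by rw [h, hτ2])]
    · rw [if_neg h, if_neg]
      intro hc2
      apply h
      rw [← hτ2 k, hc2]
  rw [hsr]

lemma conj_mem (hcdA : ∀ i j, A (τ i) (τ j) = A i j) (hτ2 : ∀ i, τ (τ i) = i)
    (htv : ∀ i, tV (sr i) = sr (τ i)) (hs : IsReflRep A s)
    {X : Set I} (hτX : ∀ i ∈ X, τ i ∈ X)
    {w : (I → ℚ) ≃ₗ[ℚ] (I → ℚ)} (hw : w ∈ Wpara s X) :
    tV * w * tV ∈ Wpara s X := by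
  have htVsq : tV * tV = 1 := tV_sq htv hτ2
  have hw' : w ∈ Subgroup.closure (s '' X) := hw
  refine Subgroup.closure_induction
    (p := fun g _ => tV * g * tV ∈ Wpara s X) ?_ ?_ ?_ ?_ hw'
  · rintro x ⟨i, hi, rfl⟩
    rw [conj_s hcdA hτ2 htv hs]
    exact s_mem_wpara (hτX i hi)
  · show tV * 1 * tV ∈ Wpara s X
    rw [mul_one, htVsq]
    exact Subgroup.one_mem _
  · intro x y _ _ px py
    show tV * (x * y) * tV ∈ Wpara s X
    have heq : tV * (x * y) * tV = (tV * x * tV) * (tV * y * tV) := by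
      have h1 : tV * x * tV * (tV * y * tV) = tV * x * ((tV * tV) * (y * tV)) := by
        simp only [mul_assoc]
      rw [h1, htVsq, one_mul]
      simp only [mul_assoc]
    rw [heq]
    exact Subgroup.mul_mem _ px py
  · intro x _ px
    show tV * x⁻¹ * tV ∈ Wpara s X
    have heq : tV * x⁻¹ * tV = (tV * x * tV)⁻¹ := by
      have hinv : tV⁻¹ = tV := inv_eq_of_mul_eq_one_right htVsq
      rw [mul_inv_rev, mul_inv_rev, hinv]
      simp only [mul_assoc]
    rw [heq]
    exact Subgroup.inv_mem _ px

lemma sigma_sq (hA : IsGCM A) (hs : IsReflRep A s) {X : Set I}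
    [Fintype (Wpara s X)]
    (hcdA : ∀ i j, A (τ i) (τ j) = A i j) (hτ2 : ∀ i, τ (τ i) = i)
    (hτX : ∀ i ∈ X, τ i ∈ X) (htv : ∀ i, tV (sr i) = sr (τ i))
    (hwXmem : wX ∈ Wpara s X) (hwX2 : wX * wX = 1)
    (hopp : ∀ i ∈ X, wX (sr i) = - sr (τ i)) :
    ∀ v, σmap wX tV (σmap wX tV v) = v := by
  have hconj : tV * wX * tV ∈ Wpara s X := conj_mem hcdA hτ2 htv hs hτX hwXmem
  set u : (I → ℚ) ≃ₗ[ℚ] (I → ℚ) := wX * (tV * wX * tV) with hu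
  have humem : u ∈ Wpara s X := Subgroup.mul_mem _ hwXmem hconj
  have hufix : ∀ i ∈ X, u (sr i) = sr i := by
    intro i hi
    show wX ((tV * wX * tV) (sr i)) = sr i
    have h1 : (tV * wX * tV) (sr i) = - sr (τ i) := by
      show tV (wX (tV (sr i))) = - sr (τ i)
      rw [htv i, hopp (τ i) (hτX i hi), hτ2, map_neg, htv i]
    rw [h1, map_neg, hopp (τ i) (hτX i hi), hτ2, neg_neg]
  have hid : ∀ v, u v = v := by
    intro v
    have hshift : ∀ w k, k ∉ X → u w k = w k := wpara_shift hs humem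
    have hesupp : ∀ k, k ∉ X → (u v - v) k = 0 := by
      intro k hk
      show u v k - v k = 0
      rw [hshift v k hk, sub_self]
    have hefix : u (u v - v) = u v - v := fix_of_fix_sr hufix hesupp
    have hD := Dform_inv (Wpara s X) humem v (u v - v)
    rw [hefix] at hD
    have hDe : Dform (Wpara s X) (u v - v) (u v - v) = 0 := by
      rw [Dform_sub_left, hD, sub_self]
    have h0 : u v - v = 0 := Dform_zero (le_of_eq hDe)
    exact sub_eq_zero.mp h0
  intro v
  exact hid v

end Aux3
section Aux4

variable {I : Type} [Fintype I] [DecidableEq I]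

lemma schur_posdef :
    ∀ (n : ℕ) (S : Finset I), S.card ≤ n → ∀ (C : I → I → ℚ),
      (∀ a b, C a b = C b a) →
      (∀ a ∈ S, ∀ b ∈ S, a ≠ b → C a b ≤ 0) →
      (¬ ∃ x : I → ℚ, (∀ k, 0 ≤ x k) ∧ (∀ k, k ∉ S → x k = 0) ∧ x ≠ 0 ∧
          ∀ a ∈ S, ∑ b ∈ S, C a b * x b ≤ 0) →
      ∀ v : I → ℚ, (∀ k, k ∉ S → v k = 0) → v ≠ 0 →
        0 < ∑ a ∈ S, ∑ b ∈ S, v a * (C a b * v b) := by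
  intro n
  induction n with
  | zero =>
    intro S hS C _ _ _ v hv hvne
    have hSempty : S = ∅ := Finset.card_eq_zero.mp (le_antisymm hS (Nat.zero_le _))
    exact absurd (funext fun k => hv k (by rw [hSempty]; exact Finset.notMem_empty k)) hvne
  | succ n ih =>
    intro S hS C hsym hoff hnk v hv hvne
    rcases S.eq_empty_or_nonempty with rfl | ⟨n₀, hn₀⟩
    · exact absurd (funext fun k => hv k (Finset.notMem_empty k)) hvne
    · have hd : 0 < C n₀ n₀ := by
        by_contra hdc
        push_neg at hdc
        apply hnk
        refine ⟨fun k => if k = n₀ then 1 else 0, ?_, ?_, ?_, ?_⟩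
        · intro k
          by_cases h : k = n₀ <;> simp [h]
        · intro k hk
          have h : k ≠ n₀ := fun h => hk (by rw [h]; exact hn₀)
          simp [h]
        · intro h
          have := congrFun h n₀
          simp at this
        · intro a ha
          have hgoal : ∑ b ∈ S, C a b * (fun k => if k = n₀ then (1 : ℚ) else 0) b
              = ∑ b ∈ S, C a b * (if b = n₀ then (1 : ℚ) else 0) := rfl
          have hsum : ∑ b ∈ S, C a b * (if b = n₀ then (1 : ℚ) else 0) = C a n₀ := by
            rw [Finset.sum_eq_single_of_mem n₀ hn₀ (fun b _ hb => by simp [hb])]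
            simp
          rw [hgoal, hsum]
          rcases eq_or_ne a n₀ with rfl | hne
          · exact hdc
          · exact hoff a ha n₀ hn₀ hne
      set S' := S.erase n₀ with hS'def
      have hn₀S' : n₀ ∉ S' := Finset.notMem_erase n₀ S
      have hins : insert n₀ S' = S := Finset.insert_erase hn₀
      have hcard : S'.card ≤ n := by
        rw [hS'def, Finset.card_erase_of_mem hn₀]
        omega
      set C' : I → I → ℚ := fun a b => C a b - C a n₀ * C n₀ b / C n₀ n₀ with hC'def
      have hsym' : ∀ a b, C' a b = C' b a := by
        intro a b
        simp only [hC'def]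
        rw [hsym a b, hsym a n₀, hsym n₀ b]
        ring
      have hoff' : ∀ a ∈ S', ∀ b ∈ S', a ≠ b → C' a b ≤ 0 := by
        intro a ha b hb hab
        have haS := Finset.mem_of_mem_erase ha
        have han := Finset.ne_of_mem_erase ha
        have hbS := Finset.mem_of_mem_erase hb
        have hbn := Finset.ne_of_mem_erase hb
        have h1 : C a n₀ ≤ 0 := hoff a haS n₀ hn₀ han
        have h2 : C n₀ b ≤ 0 := hoff n₀ hn₀ b hbS (Ne.symm hbn)
        have h3 : 0 ≤ C a n₀ * C n₀ b := by nlinarith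
        have h4 : 0 ≤ C a n₀ * C n₀ b / C n₀ n₀ := div_nonneg h3 (le_of_lt hd)
        have h5 := hoff a haS b hbS hab
        simp only [hC'def]
        linarith
      have hnk' : ¬ ∃ x : I → ℚ, (∀ k, 0 ≤ x k) ∧ (∀ k, k ∉ S' → x k = 0) ∧ x ≠ 0 ∧
          ∀ a ∈ S', ∑ b ∈ S', C' a b * x b ≤ 0 := by
        rintro ⟨x, hx0, hxs, hxne, hxrow⟩
        apply hnk
        have hsum_nonpos : ∑ b ∈ S', C n₀ b * x b ≤ 0 := by
          apply Finset.sum_nonpos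
          intro b hb
          exact mul_nonpos_iff.mpr (Or.inr
            ⟨hoff n₀ hn₀ b (Finset.mem_of_mem_erase hb)
              (Ne.symm (Finset.ne_of_mem_erase hb)), hx0 b⟩)
        set t : ℚ := -(∑ b ∈ S', C n₀ b * x b) / C n₀ n₀ with htdef
        have ht0 : 0 ≤ t := div_nonneg (by linarith) (le_of_lt hd)
        refine ⟨Function.update x n₀ t, ?_, ?_, ?_, ?_⟩
        · intro k
          rw [Function.update_apply]
          split
          · exact ht0
          · exact hx0 k
        · intro k hk
          have hkn : k ≠ n₀ := fun h => hk (h ▸ hn₀)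
          rw [Function.update_apply, if_neg hkn]
          exact hxs k (fun h => hk (Finset.mem_of_mem_erase h))
        · intro h
          obtain ⟨k, hk⟩ : ∃ k, x k ≠ 0 := by
            by_contra hc
            push_neg at hc
            exact hxne (funext hc)
          have hkS' : k ∈ S' := by
            by_contra hc
            exact hk (hxs k hc)
          have hkn : k ≠ n₀ := Finset.ne_of_mem_erase hkS'
          have := congrFun h k
          rw [Function.update_apply, if_neg hkn] at this
          exact hk this
        · intro a ha
          have hsplit : ∑ b ∈ S, C a b * Function.update x n₀ t b
              = C a n₀ * t + ∑ b ∈ S', C a b * x b := by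
            rw [← hins, Finset.sum_insert hn₀S']
            congr 1
            · rw [Function.update_self]
            · refine Finset.sum_congr rfl fun b hb => ?_
              rw [Function.update_apply, if_neg (Finset.ne_of_mem_erase hb)]
          rw [hsplit]
          by_cases han : a = n₀
          · rw [han]
            have heq : C n₀ n₀ * t = -(∑ b ∈ S', C n₀ b * x b) := by
              rw [htdef, mul_comm]
              exact div_mul_cancel₀ _ (ne_of_gt hd)
            rw [heq]
            linarith
          · have haS' : a ∈ S' := Finset.mem_erase.mpr ⟨han, ha⟩
            have hr := hxrow a haS'
            have hexp : ∑ b ∈ S', C' a b * x b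
                = ∑ b ∈ S', C a b * x b - C a n₀ / C n₀ n₀ * ∑ b ∈ S', C n₀ b * x b := by
              rw [Finset.mul_sum, ← Finset.sum_sub_distrib]
              refine Finset.sum_congr rfl fun b _ => ?_
              simp only [hC'def]
              ring
            have hteq : C a n₀ * t = -(C a n₀ / C n₀ n₀ * ∑ b ∈ S', C n₀ b * x b) := by
              rw [htdef]
              ring
            rw [hexp] at hr
            linarith
      have IH := ih S' hcard C' hsym' hoff' hnk'
      set v' := Function.update v n₀ 0 with hv'def
      have hv'n₀ : v' n₀ = 0 := by
        rw [hv'def]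
        exact Function.update_self n₀ 0 v
      have hvb : ∀ b ∈ S', v b = v' b := by
        intro b hb
        rw [hv'def, Function.update_apply, if_neg (Finset.ne_of_mem_erase hb)]
      have hv'supp : ∀ k, k ∉ S' → v' k = 0 := by
        intro k hk
        rcases eq_or_ne k n₀ with rfl | hkn
        · exact hv'n₀
        · rw [hv'def, Function.update_apply, if_neg hkn]
          exact hv k (fun h => hk (Finset.mem_erase.mpr ⟨hkn, h⟩))
      set sv := ∑ b ∈ S', C n₀ b * v' b with hsvdef
      have hinner : ∀ a, ∑ b ∈ S, v a * (C a b * v b)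
          = v a * (C a n₀ * v n₀) + ∑ b ∈ S', v a * (C a b * v' b) := by
        intro a
        rw [← hins, Finset.sum_insert hn₀S']
        congr 1
        refine Finset.sum_congr rfl fun b hb => ?_
        rw [hvb b hb]
      have e1 : ∑ b ∈ S', v n₀ * (C n₀ b * v' b) = v n₀ * sv := by
        rw [hsvdef, Finset.mul_sum]
      have e2 : ∑ a ∈ S', (v a * (C a n₀ * v n₀) + ∑ b ∈ S', v a * (C a b * v' b))
          = v n₀ * sv + ∑ a ∈ S', ∑ b ∈ S', v' a * (C a b * v' b) := by
        rw [Finset.sum_add_distrib]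
        congr 1
        · rw [hsvdef, Finset.mul_sum]
          exact Finset.sum_congr rfl fun a ha => by rw [hvb a ha, hsym n₀ a]; ring
        · exact Finset.sum_congr rfl fun a ha =>
            Finset.sum_congr rfl fun b _ => by rw [hvb a ha]
      have hQsplit : ∑ a ∈ S, ∑ b ∈ S, v a * (C a b * v b)
          = (∑ a ∈ S', ∑ b ∈ S', v' a * (C a b * v' b)) + 2 * v n₀ * sv
            + C n₀ n₀ * v n₀ ^ 2 := by
        calc ∑ a ∈ S, ∑ b ∈ S, v a * (C a b * v b)
            = ∑ a ∈ S, (v a * (C a n₀ * v n₀) + ∑ b ∈ S', v a * (C a b * v' b)) :=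
              Finset.sum_congr rfl fun a _ => hinner a
          _ = (v n₀ * (C n₀ n₀ * v n₀) + ∑ b ∈ S', v n₀ * (C n₀ b * v' b))
              + ∑ a ∈ S', (v a * (C a n₀ * v n₀) + ∑ b ∈ S', v a * (C a b * v' b)) := by
              rw [← hins, Finset.sum_insert hn₀S']
          _ = (v n₀ * (C n₀ n₀ * v n₀) + v n₀ * sv)
              + (v n₀ * sv + ∑ a ∈ S', ∑ b ∈ S', v' a * (C a b * v' b)) := by
              rw [e1, e2]
          _ = (∑ a ∈ S', ∑ b ∈ S', v' a * (C a b * v' b)) + 2 * v n₀ * sv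
              + C n₀ n₀ * v n₀ ^ 2 := by
              ring
      have hQ' : ∑ a ∈ S', ∑ b ∈ S', v' a * (C' a b * v' b)
          = (∑ a ∈ S', ∑ b ∈ S', v' a * (C a b * v' b)) - sv ^ 2 / C n₀ n₀ := by
        have hrow : ∀ a ∈ S', ∑ b ∈ S', v' a * (C' a b * v' b)
            = (∑ b ∈ S', v' a * (C a b * v' b)) - v' a * C a n₀ / C n₀ n₀ * sv := by
          intro a _
          rw [hsvdef, Finset.mul_sum, ← Finset.sum_sub_distrib]
          refine Finset.sum_congr rfl fun b _ => ?_
          simp only [hC'def]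
          ring
        rw [Finset.sum_congr rfl hrow, Finset.sum_sub_distrib]
        have h1 : ∑ a ∈ S', v' a * C a n₀ / C n₀ n₀ * sv
            = (∑ a ∈ S', C n₀ a * v' a) * sv / C n₀ n₀ := by
          rw [Finset.sum_mul, Finset.sum_div]
          refine Finset.sum_congr rfl fun a _ => ?_
          rw [hsym n₀ a]
          ring
        rw [h1, ← hsvdef]
        ring
      have hkey : ∑ a ∈ S, ∑ b ∈ S, v a * (C a b * v b)
          = (∑ a ∈ S', ∑ b ∈ S', v' a * (C' a b * v' b))
            + (sv + C n₀ n₀ * v n₀) ^ 2 / C n₀ n₀ := by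
        rw [hQsplit, hQ']
        field_simp
        ring
      rw [hkey]
      rcases eq_or_ne v' 0 with hv'0 | hv'ne
      · have hsv0 : sv = 0 := by
          rw [hsvdef]
          apply Finset.sum_eq_zero
          intro b _
          rw [hv'0]
          simp
        have hQ'0 : ∑ a ∈ S', ∑ b ∈ S', v' a * (C' a b * v' b) = 0 := by
          apply Finset.sum_eq_zero
          intro a _
          apply Finset.sum_eq_zero
          intro b _
          rw [hv'0]
          simp
        have htne : v n₀ ≠ 0 := by
          intro ht0
          apply hvne
          funext k
          rcases eq_or_ne k n₀ with rfl | hkn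
          · exact ht0
          · have h := congrFun hv'0 k
            rw [hv'def, Function.update_apply, if_neg hkn] at h
            exact h
        rw [hQ'0, hsv0, zero_add, zero_add]
        have h1 : (C n₀ n₀ * v n₀) ^ 2 / C n₀ n₀ = C n₀ n₀ * v n₀ ^ 2 := by
          rw [div_eq_iff (ne_of_gt hd)]
          ring
        rw [h1]
        positivity
      · have hIH := IH v' hv'supp hv'ne
        have hsq : 0 ≤ (sv + C n₀ n₀ * v n₀) ^ 2 / C n₀ n₀ :=
          div_nonneg (sq_nonneg _) (le_of_lt hd)
        linarith

end Aux4
section Aux5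

variable {I : Type} [Fintype I] [DecidableEq I]
variable {A : I → I → ℤ} {s : I → ((I → ℚ) ≃ₗ[ℚ] (I → ℚ))} {ε : I → ℚ}
  {B : (I → ℚ) →ₗ[ℚ] (I → ℚ) →ₗ[ℚ] ℚ}

lemma B_quad (hB : IsInvForm A ε B s) {J : Set I} (Jf : Finset I)
    (hJf : ∀ k, k ∈ Jf ↔ k ∈ J) {v : I → ℚ} (hv : ∀ k, k ∉ J → v k = 0) :
    B v v = ∑ a ∈ Jf, ∑ b ∈ Jf, v a * ((ε a * (A a b : ℚ)) * v b) := by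
  rw [B_left_expand hB]
  rw [← Finset.sum_subset (Finset.subset_univ Jf)
    (fun a _ ha => by rw [hv a (fun h => ha ((hJf a).mpr h)), zero_mul])]
  refine Finset.sum_congr rfl fun a _ => ?_
  rw [B_row hB]
  rw [← Finset.sum_subset (Finset.subset_univ Jf)
    (fun b _ hb => by rw [hv b (fun h => hb ((hJf b).mpr h)), zero_mul])]
  rw [Finset.mul_sum, Finset.mul_sum]
  exact Finset.sum_congr rfl fun b _ => by ring

set_option maxHeartbeats 1000000 in
lemma wpara_finite (hA : IsGCM A) (hs : IsReflRep A s) (hB : IsInvForm A ε B s)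
    (J : Set I)
    (PD : ∀ v : I → ℚ, (∀ k, k ∉ J → v k = 0) → v ≠ 0 → 0 < B v v) :
    Finite (Wpara s J) := by
  classical
  set Jf : Finset I := Finset.univ.filter (fun k => k ∈ J) with hJfdef
  have hJf : ∀ k, k ∈ Jf ↔ k ∈ J := by
    intro k
    rw [hJfdef, Finset.mem_filter]
    simp
  have hsumK : ∀ (f : I → ℚ), (∀ a, a ∉ Jf → f a = 0) →
      ∑ a, f a = ∑ a : {x // x ∈ Jf}, f a.1 := by
    intro f hf
    rw [← Finset.sum_subset (Finset.subset_univ Jf) (fun a _ ha => hf a ha)]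
    rw [← Finset.sum_attach Jf f, Finset.univ_eq_attach]
  set ext : ({x // x ∈ Jf} → ℚ) → (I → ℚ) :=
    fun x k => if h : k ∈ Jf then x ⟨k, h⟩ else 0 with hextdef
  have hext_apply : ∀ x (a : {x // x ∈ Jf}), ext x a.1 = x a := by
    intro x a
    simp only [hextdef]
    rw [dif_pos a.2]
  have hext_supp : ∀ x, ∀ k, k ∉ J → ext x k = 0 := by
    intro x k hk
    simp only [hextdef]
    exact dif_neg (fun h => hk ((hJf k).mp h))
  set Cm : {x // x ∈ Jf} → {x // x ∈ Jf} → ℚ :=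
    fun a b => ε a.1 * (A a.1 b.1 : ℚ) with hCm
  set T : ({x // x ∈ Jf} → ℚ) →ₗ[ℚ] ({x // x ∈ Jf} → ℚ) :=
    { toFun := fun x a => ∑ b, Cm a b * x b,
      map_add' := by
        intro x y
        funext a
        simp [mul_add, Finset.sum_add_distrib]
      map_smul' := by
        intro c x
        funext a
        simp [Finset.mul_sum, mul_left_comm] } with hT
  have hTapp : ∀ (x : {x // x ∈ Jf} → ℚ) (a : {x // x ∈ Jf}),
      T x a = ∑ b, Cm a b * x b := fun x a => rfl
  have hTa : ∀ (x : {x // x ∈ Jf} → ℚ) (a : {x // x ∈ Jf}),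
      B (sr a.1) (ext x) = T x a := by
    intro x a
    rw [B_row hB]
    have h1 : ∑ b, ext x b * (A a.1 b : ℚ) = ∑ b : {x // x ∈ Jf}, x b * (A a.1 b.1 : ℚ) := by
      rw [hsumK _ (fun b hb => by
        rw [show ext x b = 0 from by simp only [hextdef]; exact dif_neg hb, zero_mul])]
      exact Finset.sum_congr rfl fun b _ => by rw [hext_apply]
    rw [h1, hTapp, Finset.mul_sum]
    exact Finset.sum_congr rfl fun b _ => by simp only [hCm]; ring
  have hinj : Function.Injective T := by
    have h0 : ∀ x, T x = 0 → x = 0 := by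
      intro x hx
      by_contra hxne
      have hextne : ext x ≠ 0 := by
        intro h
        apply hxne
        funext a
        have h2 := congrFun h a.1
        rw [hext_apply] at h2
        exact h2
      have hpos := PD (ext x) (hext_supp x) hextne
      have hBzero : B (ext x) (ext x) = 0 := by
        rw [B_left_expand hB]
        rw [hsumK _ (fun a ha => by
          rw [show ext x a = 0 from by simp only [hextdef]; exact dif_neg ha, zero_mul])]
        apply Finset.sum_eq_zero
        intro a _
        rw [hTa, show T x a = 0 from by rw [hx]; rfl, mul_zero]
      rw [hBzero] at hpos
      exact lt_irrefl 0 hpos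
    intro x y hxy
    exact sub_eq_zero.mp (h0 (x - y) (by rw [map_sub, hxy, sub_self]))
  have hsurj := LinearMap.injective_iff_surjective.mp hinj
  choose y hy using fun k : {x // x ∈ Jf} => hsurj (Pi.single k 1)
  set g : {x // x ∈ Jf} → (I → ℚ) := fun k => ext (y k) with hgdef
  have hg_supp : ∀ (k : {x // x ∈ Jf}) m, m ∉ J → g k m = 0 := by
    intro k m hm
    simp only [hgdef]
    exact hext_supp (y k) m hm
  have hg : ∀ (k : {x // x ∈ Jf}) (v : I → ℚ), (∀ m, m ∉ J → v m = 0) →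
      B v (g k) = v k.1 := by
    intro k v hv
    rw [B_left_expand hB]
    rw [hsumK _ (fun a ha => by rw [hv a (fun h => ha ((hJf a).mpr h)), zero_mul])]
    have hterm : ∀ a : {x // x ∈ Jf}, B (sr a.1) (g k) = (Pi.single k 1 : {x // x ∈ Jf} → ℚ) a := by
      intro a
      simp only [hgdef]
      rw [hTa (y k) a, hy k]
    rw [Finset.sum_congr rfl fun a _ => by rw [hterm a]]
    rw [Finset.sum_eq_single k
      (fun b _ hb => by rw [Pi.single_apply, if_neg hb, mul_zero])
      (fun h => absurd (Finset.mem_univ k) h)]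
    rw [Pi.single_apply, if_pos rfl, mul_one]
  have psd : ∀ v : I → ℚ, (∀ m, m ∉ J → v m = 0) → 0 ≤ B v v := by
    intro v hv
    rcases eq_or_ne v 0 with rfl | h
    · simp
    · exact le_of_lt (PD v hv h)
  have CS : ∀ u v : I → ℚ, (∀ m, m ∉ J → u m = 0) → (∀ m, m ∉ J → v m = 0) →
      (B u v) ^ 2 ≤ B u u * B v v := by
    intro u v hu hv
    rcases eq_or_ne v 0 with rfl | hvne
    · simp
    · have hbv : 0 < B v v := PD v hv hvne
      have hwsupp : ∀ m, m ∉ J → (B v v • u - B u v • v) m = 0 := by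
        intro m hm
        show B v v * u m - B u v * v m = 0
        rw [hu m hm, hv m hm, mul_zero, mul_zero, sub_self]
      have h0 : 0 ≤ B (B v v • u - B u v • v) (B v v • u - B u v • v) := psd _ hwsupp
      have hexp : B (B v v • u - B u v • v) (B v v • u - B u v • v)
          = B v v * (B v v * B u u - B u v ^ 2) := by
        simp only [map_sub, map_smul, LinearMap.sub_apply, LinearMap.smul_apply,
          smul_eq_mul]
        rw [hB.2.1 v u]
        ring
      rw [hexp] at h0
      nlinarith
  set Mb : ℚ := ∑ j ∈ Jf, ∑ k : {x // x ∈ Jf}, |(ε j * (A j j : ℚ)) * B (g k) (g k)|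
    with hMbdef
  obtain ⟨N, hN⟩ := exists_int_gt Mb
  have hMb0 : 0 ≤ Mb :=
    Finset.sum_nonneg fun j _ => Finset.sum_nonneg fun k _ => abs_nonneg _
  have hN0 : 0 < N := by exact_mod_cast lt_of_le_of_lt hMb0 hN
  set R : Finset ℚ := (Finset.Icc (-N) N).image (fun m : ℤ => (m : ℚ)) with hRdef
  set Tf : Finset (I → ℚ) :=
    Fintype.piFinset (fun k => if k ∈ Jf then R else ({0} : Finset ℚ)) with hTfdef
  have hkey : ∀ (w' : (I → ℚ) ≃ₗ[ℚ] (I → ℚ)), w' ∈ Wpara s J → ∀ j ∈ Jf,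
      w' (sr j) ∈ Tf := by
    intro w' hw' j hj
    rw [hTfdef, Fintype.mem_piFinset]
    intro k
    have hjJ : j ∈ J := (hJf j).mp hj
    have hxsupp : ∀ m, m ∉ J → w' (sr j) m = 0 := by
      intro m hm
      rw [wpara_shift hs hw' (sr j) m hm, sr_apply, if_neg (fun h => hm (by rw [h]; exact hjJ))]
    have hxint : ∀ m, ∃ z : ℤ, w' (sr j) m = z := by
      refine (wpara_int hA hs hw' (sr j)).mp ?_
      intro m
      rw [sr_apply]
      by_cases h : m = j
      · exact ⟨1, by rw [if_pos h]; norm_num⟩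
      · exact ⟨0, by rw [if_neg h]; norm_num⟩
    by_cases hk : k ∈ Jf
    · rw [if_pos hk]
      obtain ⟨z, hz⟩ := hxint k
      have hb : (w' (sr j) k) ^ 2 ≤ (ε j * (A j j : ℚ)) * B (g ⟨k, hk⟩) (g ⟨k, hk⟩) := by
        have h1 : w' (sr j) k = B (w' (sr j)) (g ⟨k, hk⟩) := (hg ⟨k, hk⟩ _ hxsupp).symm
        have h2 := CS (w' (sr j)) (g ⟨k, hk⟩) hxsupp (hg_supp ⟨k, hk⟩)
        have h3 : B (w' (sr j)) (w' (sr j)) = ε j * (A j j : ℚ) := by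
          rw [wpara_B hB.2.2.2 hw', hB.2.2.1]
        rw [h1]
        rw [h3] at h2
        exact h2
      have hble : (w' (sr j) k) ^ 2 ≤ Mb := by
        refine le_trans hb (le_trans (le_abs_self _) ?_)
        calc |(ε j * (A j j : ℚ)) * B (g ⟨k, hk⟩) (g ⟨k, hk⟩)|
            ≤ ∑ k' : {x // x ∈ Jf}, |(ε j * (A j j : ℚ)) * B (g k') (g k')| :=
              Finset.single_le_sum
                (f := fun k' : {x // x ∈ Jf} => |(ε j * (A j j : ℚ)) * B (g k') (g k')|)
                (fun _ _ => abs_nonneg _) (Finset.mem_univ (⟨k, hk⟩ : {x // x ∈ Jf}))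
          _ ≤ Mb := Finset.single_le_sum
              (f := fun j' => ∑ k' : {x // x ∈ Jf}, |(ε j' * (A j' j' : ℚ)) * B (g k') (g k')|)
              (fun _ _ => Finset.sum_nonneg fun _ _ => abs_nonneg _) hj
      rw [hRdef, Finset.mem_image]
      refine ⟨z, ?_, hz.symm⟩
      rw [Finset.mem_Icc]
      rcases eq_or_ne z 0 with rfl | hzne
      · constructor <;> omega
      · have h1 : (1 : ℤ) ≤ |z| := Int.one_le_abs hzne
        have h2 : ((|z| : ℤ) : ℚ) ≤ ((z : ℚ)) ^ 2 := by
          calc ((|z| : ℤ) : ℚ) = ((|z| : ℤ) : ℚ) * 1 := by ring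
            _ ≤ ((|z| : ℤ) : ℚ) * ((|z| : ℤ) : ℚ) := by
                apply mul_le_mul_of_nonneg_left
                · exact_mod_cast h1
                · positivity
            _ = ((z : ℚ)) ^ 2 := by
                push_cast
                rw [abs_mul_abs_self]
                ring
        have h3 : ((|z| : ℤ) : ℚ) < (N : ℚ) := by
          calc ((|z| : ℤ) : ℚ) ≤ (z : ℚ) ^ 2 := h2
            _ ≤ Mb := by rw [← hz]; exact hble
            _ < N := hN
        have h4 : |z| < N := by exact_mod_cast h3
        have h5 := abs_lt.mp h4
        constructor <;> omega
    · rw [if_neg hk, Finset.mem_singleton]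
      exact hxsupp k (fun h => hk ((hJf k).mpr h))
  let F : (Wpara s J) → ({x // x ∈ Jf} → {x // x ∈ Tf}) :=
    fun w k => ⟨w.1 (sr k.1), hkey w.1 w.2 k.1 k.2⟩
  have hFinj : Function.Injective F := by
    intro w₁ w₂ hF
    have hsreq : ∀ j ∈ Jf, w₁.1 (sr j) = w₂.1 (sr j) := by
      intro j hj
      have := congrFun hF ⟨j, hj⟩
      exact Subtype.ext_iff.mp this
    have hufix : ∀ j ∈ J, (w₁⁻¹ * w₂).1 (sr j) = sr j := by
      intro j hj
      show (w₁.1)⁻¹ (w₂.1 (sr j)) = sr j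
      rw [← hsreq j ((hJf j).mpr hj)]
      exact (w₁.1).symm_apply_apply (sr j)
    have hfixall : ∀ v, (w₁⁻¹ * w₂).1 v = v := by
      intro v
      have humem : (w₁⁻¹ * w₂).1 ∈ Wpara s J := (w₁⁻¹ * w₂).2
      have hesupp : ∀ m, m ∉ J → ((w₁⁻¹ * w₂).1 v - v) m = 0 := by
        intro m hm
        show (w₁⁻¹ * w₂).1 v m - v m = 0
        rw [wpara_shift hs humem v m hm, sub_self]
      have hefix : (w₁⁻¹ * w₂).1 ((w₁⁻¹ * w₂).1 v - v) = (w₁⁻¹ * w₂).1 v - v :=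
        fix_of_fix_sr (fun i hi => hufix i hi) hesupp
      have hBinv := wpara_B hB.2.2.2 humem v ((w₁⁻¹ * w₂).1 v - v)
      rw [hefix] at hBinv
      have h0 : B ((w₁⁻¹ * w₂).1 v - v) ((w₁⁻¹ * w₂).1 v - v) = 0 := by
        rw [show B ((w₁⁻¹ * w₂).1 v - v) = B ((w₁⁻¹ * w₂).1 v) - B v from
          map_sub B _ _, LinearMap.sub_apply, hBinv, sub_self]
      have he0 : (w₁⁻¹ * w₂).1 v - v = 0 := by
        by_contra hne
        exact absurd h0 (ne_of_gt (PD _ hesupp hne))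
      exact sub_eq_zero.mp he0
    apply Subtype.ext
    apply LinearEquiv.toLinearMap_injective
    apply LinearMap.ext
    intro v
    show w₁.1 v = w₂.1 v
    calc w₁.1 v = w₁.1 ((w₁⁻¹ * w₂).1 v) := by rw [hfixall v]
      _ = (w₁ * (w₁⁻¹ * w₂)).1 v := rfl
      _ = w₂.1 v := by rw [mul_inv_cancel_left]
  exact Finite.of_injective F hFinj

end Aux5

set_option maxHeartbeats 1000000

/-- Let `J ⊆ I` be of infinite type (`W_J` infinite) and stable under the involutive
root-system isometry `σ = w_X ∘ τ` of a compatible decoration, and suppose the fixed space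
`(V_J)^σ` is 1-dimensional.  Then `(β, β) ≤ 0` for every nonzero `β = (λ + σ λ)/2` with
`λ ∈ Φ_J`. -/
theorem restricted_roots_nonpositive_norm_of_infinite_type
    {I : Type} [Fintype I] [DecidableEq I]
    (A : I → I → ℤ) (hA : IsGCM A)
    (s : I → ((I → ℚ) ≃ₗ[ℚ] (I → ℚ))) (hs : IsReflRep A s)
    (ε : I → ℚ) (B : (I → ℚ) →ₗ[ℚ] (I → ℚ) →ₗ[ℚ] ℚ) (hB : IsInvForm A ε B s)
    (X : Set I) (τ : Equiv.Perm I) (tV wX : (I → ℚ) ≃ₗ[ℚ] (I → ℚ))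
    (hcd : IsCompatibleDec A s X τ tV wX)
    (Φ : Set (I → ℚ)) (hΦ : IsRootSystem s Φ)
    (J : Set I)
    (hJinf : Infinite (Wpara s J))
    (hJσ : ∀ v : I → ℚ, (∀ k, k ∉ J → v k = 0) → (∀ k, k ∉ J → σmap wX tV v k = 0))
    (hJΦ : ∀ l ∈ Φ, (∀ k, k ∉ J → l k = 0) → σmap wX tV l ∈ Φ)
    (hdim : ∃ β₀ : I → ℚ, β₀ ≠ 0 ∧ (∀ k, k ∉ J → β₀ k = 0) ∧ σmap wX tV β₀ = β₀ ∧
      ∀ v : I → ℚ, (∀ k, k ∉ J → v k = 0) → σmap wX tV v = v → ∃ c : ℚ, v = c • β₀) :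
    ∀ l ∈ Φ, (∀ k, k ∉ J → l k = 0) → bar (σmap wX tV) l ≠ 0 →
      B (bar (σmap wX tV) l) (bar (σmap wX tV) l) ≤ 0 := by
  intro l hl hlsupp hbar
  classical
  obtain ⟨hcdA, hτ2, hτX, htv, hfinX, hwXmem, hwX2, hopp⟩ := hcd
  haveI : Fintype (Wpara s X) := @Fintype.ofFinite _ hfinX
  have hσσ : ∀ v, σmap wX tV (σmap wX tV v) = v :=
    sigma_sq hA hs hcdA hτ2 hτX htv hwXmem hwX2 hopp
  -- existence of a Kac vector on J
  have hkac : ∃ lam : I → ℚ, (∀ k, 0 ≤ lam k) ∧ (∀ k, k ∉ J → lam k = 0) ∧ lam ≠ 0 ∧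
      ∀ i ∈ J, ∑ j, lam j * (A i j : ℚ) ≤ 0 := by
    by_contra hno
    have PD : ∀ v : I → ℚ, (∀ k, k ∉ J → v k = 0) → v ≠ 0 → 0 < B v v := by
      set Jf : Finset I := Finset.univ.filter (fun k => k ∈ J) with hJfdef
      have hJf : ∀ k, k ∈ Jf ↔ k ∈ J := by
        intro k
        rw [hJfdef, Finset.mem_filter]
        simp
      intro v hv hvne
      rw [B_quad hB Jf hJf hv]
      refine schur_posdef (Fintype.card I) Jf ?_ (fun a b => ε a * (A a b : ℚ)) ?_ ?_ ?_
        v (fun k hk => hv k (fun h => hk ((hJf k).mpr h))) hvne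
      · exact le_trans (Finset.card_le_card (Finset.subset_univ Jf))
          (le_of_eq Finset.card_univ)
      · intro a b
        show ε a * (A a b : ℚ) = ε b * (A b a : ℚ)
        rw [← hB.2.2.1, ← hB.2.2.1, hB.2.1]
      · intro a _ b _ hab
        show ε a * (A a b : ℚ) ≤ 0
        have h1 : (A a b : ℚ) ≤ 0 := by exact_mod_cast hA.2.1 a b hab
        exact mul_nonpos_iff.mpr (Or.inl ⟨le_of_lt (hB.1 a), h1⟩)
      · rintro ⟨x, hx0, hxs, hxne, hxrow⟩
        apply hno
        refine ⟨x, hx0, fun k hk => hxs k (fun h => hk ((hJf k).mp h)), hxne, ?_⟩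
        intro i hi
        have hr : ∑ b ∈ Jf, (ε i * (A i b : ℚ)) * x b ≤ 0 := hxrow i ((hJf i).mpr hi)
        have hexp : ∑ b ∈ Jf, (ε i * (A i b : ℚ)) * x b
            = ε i * ∑ j, x j * (A i j : ℚ) := by
          rw [Finset.mul_sum]
          rw [← Finset.sum_subset (Finset.subset_univ Jf)
            (fun b _ hb => by rw [hxs b hb, zero_mul, mul_zero])]
          exact Finset.sum_congr rfl fun b _ => by ring
        rw [hexp] at hr
        have hεi := hB.1 i
        nlinarith
    have hfinJ : Finite (Wpara s J) := wpara_finite hA hs hB J PD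
    haveI := hfinJ
    haveI := hJinf
    exact not_finite ↥(Wpara s J)
  obtain ⟨lam, hl0, hlsuppJ, hlne, hlrow⟩ := hkac
  have hglob : ∀ i, ∑ j, lam j * (A i j : ℚ) ≤ 0 := kac_global hA hl0 hlsuppJ hlrow
  have hμ0 : ∀ k, 0 ≤ tV lam k := fun k => by
    rw [tV_apply htv hτ2]
    exact hl0 _
  have hμrow : ∀ i, ∑ j, tV lam j * (A i j : ℚ) ≤ 0 := by
    intro i
    have heq : ∑ j, tV lam j * (A i j : ℚ) = ∑ j, lam j * (A (τ i) j : ℚ) := by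
      refine Fintype.sum_equiv τ _ _ ?_
      intro j
      rw [tV_apply htv hτ2]
      congr 1
      have h1 : A (τ i) (τ j) = A i j := hcdA i j
      exact_mod_cast h1.symm
    rw [heq]
    exact hglob (τ i)
  have hsl0 : ∀ k, 0 ≤ σmap wX tV lam k := by
    intro k
    show 0 ≤ wX (tV lam) k
    exact wX_nonneg hA hs hwXmem hwX2 hopp hτX hμ0 hμrow k
  have hslsupp : ∀ k, k ∉ J → σmap wX tV lam k = 0 := fun k hk => hJσ lam hlsuppJ k hk
  have hvne : lam + σmap wX tV lam ≠ 0 := by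
    obtain ⟨k, hk⟩ : ∃ k, lam k ≠ 0 := by
      by_contra hc
      push_neg at hc
      exact hlne (funext hc)
    intro h
    have h1 := congrFun h k
    have h2 : 0 < lam k := lt_of_le_of_ne (hl0 k) (Ne.symm hk)
    have h3 : lam k + σmap wX tV lam k = 0 := h1
    have h4 := hsl0 k
    linarith
  have hvsupp : ∀ k, k ∉ J → (lam + σmap wX tV lam) k = 0 := by
    intro k hk
    show lam k + σmap wX tV lam k = 0
    rw [hlsuppJ k hk, hslsupp k hk, add_zero]
  have hσadd : ∀ a b : I → ℚ, σmap wX tV (a + b) = σmap wX tV a + σmap wX tV b := by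
    intro a b
    show wX (tV (a + b)) = wX (tV a) + wX (tV b)
    rw [map_add, map_add]
  have hvfix : σmap wX tV (lam + σmap wX tV lam) = lam + σmap wX tV lam := by
    rw [hσadd, hσσ lam, add_comm]
  have hBv : B (lam + σmap wX tV lam) (lam + σmap wX tV lam) ≤ 0 := by
    have h1 : B lam lam ≤ 0 := pair_nonpos hB hl0 hglob
    have h2 : B (σmap wX tV lam) lam ≤ 0 := pair_nonpos hB hsl0 hglob
    have h3 : B lam (σmap wX tV lam) ≤ 0 := by
      rw [hB.2.1]
      exact h2
    have h4 : B (σmap wX tV lam) (σmap wX tV lam) ≤ 0 := by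
      show B (wX (tV lam)) (wX (tV lam)) ≤ 0
      rw [wpara_B hB.2.2.2 hwXmem]
      exact pair_nonpos hB hμ0 hμrow
    have hex : B (lam + σmap wX tV lam) (lam + σmap wX tV lam)
        = B lam lam + B lam (σmap wX tV lam)
          + (B (σmap wX tV lam) lam + B (σmap wX tV lam) (σmap wX tV lam)) := by
      rw [show B (lam + σmap wX tV lam) = B lam + B (σmap wX tV lam) from
        map_add B _ _, LinearMap.add_apply, map_add, map_add]
    rw [hex]
    linarith
  obtain ⟨β₀, hβ₀ne, hβ₀supp, hβ₀fix, huniq⟩ := hdim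
  obtain ⟨c, hc⟩ := huniq (lam + σmap wX tV lam) hvsupp hvfix
  have hcne : c ≠ 0 := by
    rintro rfl
    rw [zero_smul] at hc
    exact hvne hc
  have hβsupp : ∀ k, k ∉ J → bar (σmap wX tV) l k = 0 := by
    intro k hk
    show (2⁻¹ : ℚ) • (l + σmap wX tV l) k = 0
    have h1 : (l + σmap wX tV l) k = 0 := by
      show l k + σmap wX tV l k = 0
      rw [hlsupp k hk, hJσ l hlsupp k hk, add_zero]
    show (2⁻¹ : ℚ) * (l + σmap wX tV l) k = 0
    rw [h1, mul_zero]
  have hσsmul : ∀ (c : ℚ) (a : I → ℚ), σmap wX tV (c • a) = c • σmap wX tV a := by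
    intro c a
    show wX (tV (c • a)) = c • wX (tV a)
    rw [map_smul, map_smul]
  have hβfix : σmap wX tV (bar (σmap wX tV) l) = bar (σmap wX tV) l := by
    show σmap wX tV ((2⁻¹ : ℚ) • (l + σmap wX tV l)) = (2⁻¹ : ℚ) • (l + σmap wX tV l)
    rw [hσsmul, hσadd, hσσ l, add_comm]
  obtain ⟨c', hc'⟩ := huniq (bar (σmap wX tV) l) hβsupp hβfix
  have hβv : bar (σmap wX tV) l = (c' / c) • (lam + σmap wX tV lam) := by
    rw [hc', hc, smul_smul]
    congr 1
    field_simp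
  rw [hβv]
  have hBsmul : B ((c' / c) • (lam + σmap wX tV lam)) ((c' / c) • (lam + σmap wX tV lam))
      = (c' / c) ^ 2 * B (lam + σmap wX tV lam) (lam + σmap wX tV lam) := by
    rw [show B ((c' / c) • (lam + σmap wX tV lam))
        = (c' / c) • B (lam + σmap wX tV lam) from map_smul B _ _,
      LinearMap.smul_apply, map_smul, smul_eq_mul, smul_eq_mul]
    ring
  rw [hBsmul]
  exact mul_nonpos_iff.mpr (Or.inl ⟨sq_nonneg _, hBv⟩)

end KMStmt
end

section
/- Let (X,τ) be a compatible decoration that is NOT a generalized Satake diagram, witnessed by i ∈ I\X with τ(i) = i and j ∈ X such that {i,j} is a connected component of X[i] of type A₂ (a_{ij} = a_{ji} = −1, both orthogonal to the rest of X). Then s̃_i := w_X · w_{X[i]} acts on the span of α_i, α_j as s_i s_j, which has order 3, and s̃_i does not stabilize the fixed space V^σ (indeed s̃_i(α̅_i) = (α_j − α_i)/2 is not σ-fixed). -/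
/-!
The generators of `W_{X[i]}` preserve the plane spanned by `α i` and `α j`: `s i` and `s j` act
there as the simple reflections of type `A₂`, and every other `s k` acts trivially since `{i, j}`
is a connected component of `X[i]`. So each element of `W_{X[i]}` acts on this plane by one of the
six matrices of the Weyl group of type `A₂`. Among these, `s i s j s i` is the only one sending
both simple roots to negative combinations, so `w_{X[i]}` acts as it; and `s j` is the only one
with `α j ↦ -α j`, which pins down `w_X` (here `τ j = j`, because `τ` preserves the Cartan matrix
and `A i j ≠ 0`). Hence `w_X w_{X[i]}` acts as `s j s i s j s i = s i s j`, and the claims are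
computations in the plane.
-/

open scoped BigOperators

namespace KMStmt

variable {I : Type}

section ReflRep

variable [DecidableEq I]

lemma smul_sr_add_smul_sr_apply_left {i j : I} (hij : i ≠ j) (a b : ℚ) :
    (a • sr i + b • sr j) i = a := by
  simp [sr, hij.symm]

lemma smul_sr_add_smul_sr_apply_right {i j : I} (hij : i ≠ j) (a b : ℚ) :
    (a • sr i + b • sr j) j = b := by
  simp [sr, hij]

variable [Fintype I]

lemma sum_sr_mul_s12 (m : I) (c : I → ℚ) : ∑ k, sr m k * c k = c m := by
  simp [sr, Pi.single_apply]

lemma linearEquiv_ext_sr {f g : (I → ℚ) ≃ₗ[ℚ] (I → ℚ)} (h : ∀ m, f (sr m) = g (sr m)) :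
    f = g :=
  (Pi.basisFun ℚ I).ext' fun m => by simpa [sr] using h m

variable {A : I → I → ℤ} {s : I → ((I → ℚ) ≃ₗ[ℚ] (I → ℚ))}

lemma IsReflRep.apply_sr (hs : IsReflRep A s) (l m : I) :
    s l (sr m) = sr m - (A l m : ℚ) • sr l := by
  rw [hs, sum_sr_mul_s12]

lemma IsReflRep.orderOf_mul_eq_three (hs : IsReflRep A s) {i j : I} (hij : i ≠ j)
    (hii : A i i = 2) (hjj : A j j = 2) (hij' : A i j = -1) (hji : A j i = -1) :
    orderOf (s i * s j) = 3 := by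
  have hcube : (s i * s j) ^ 3 = 1 := linearEquiv_ext_sr fun m => by
    simp only [LinearEquiv.pow_apply, Function.iterate_succ_apply', Function.iterate_zero_apply,
      LinearEquiv.mul_apply, map_sub, map_smul, hs.apply_sr, hii, hjj, hij', hji]
    rw [LinearEquiv.coe_one, id]
    push_cast
    module
  have hne : s i * s j ≠ 1 := fun h => by
    have hsisj : (s i * s j) (sr i) = sr j := by
      simp only [LinearEquiv.mul_apply, map_sub, map_smul, hs.apply_sr, hii, hji, hij']
      push_cast
      module
    rw [h, LinearEquiv.coe_one, id] at hsisj
    simpa [sr, hij] using congrFun hsisj i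
  have : Fact (Nat.Prime 3) := ⟨Nat.prime_three⟩
  exact orderOf_eq_prime hcube hne

end ReflRep

/-- The Weyl group of type `A₂` as integer matrices in the basis of simple roots, acting on rows:
`1`, `s₁`, `s₂`, `s₁ s₂`, `s₂ s₁`, `s₁ s₂ s₁`. -/
def dihedralA2 : List (Matrix (Fin 2) (Fin 2) ℤ) :=
  [1, !![-1, 0; 1, 1], !![1, 1; 0, -1], !![0, 1; -1, -1], !![-1, -1; 1, 0], !![0, -1; -1, 0]]

lemma dihedralA2_mul_mem : ∀ M ∈ dihedralA2, ∀ N ∈ dihedralA2, M * N ∈ dihedralA2 := by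
  decide

lemma dihedralA2_exists_inv : ∀ M ∈ dihedralA2, ∃ N ∈ dihedralA2, N * M = 1 := by
  decide

lemma dihedralA2_eq_of_nonpos : ∀ M ∈ dihedralA2,
    M 0 0 ≤ 0 → M 0 1 ≤ 0 → M 1 0 ≤ 0 → M 1 1 ≤ 0 → M = !![0, -1; -1, 0] := by
  decide

lemma dihedralA2_eq_of_row_one : ∀ M ∈ dihedralA2,
    M 1 0 = 0 → M 1 1 = -1 → M = !![1, 1; 0, -1] := by
  decide

section PairAction

variable [DecidableEq I] (i j : I)

def ActsOnPairBy (w : (I → ℚ) ≃ₗ[ℚ] (I → ℚ)) (M : Matrix (Fin 2) (Fin 2) ℤ) : Prop :=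
  w (sr i) = (M 0 0 : ℚ) • sr i + (M 0 1 : ℚ) • sr j ∧
    w (sr j) = (M 1 0 : ℚ) • sr i + (M 1 1 : ℚ) • sr j

variable {i j} {w : (I → ℚ) ≃ₗ[ℚ] (I → ℚ)} {M : Matrix (Fin 2) (Fin 2) ℤ}

lemma actsOnPairBy_one : ActsOnPairBy i j 1 1 := by
  constructor <;> simp

lemma ActsOnPairBy.apply_smul_add_smul (h : ActsOnPairBy i j w M) (a b : ℤ) :
    w ((a : ℚ) • sr i + (b : ℚ) • sr j) =
      ((a * M 0 0 + b * M 1 0 : ℤ) : ℚ) • sr i + ((a * M 0 1 + b * M 1 1 : ℤ) : ℚ) • sr j := by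
  rw [map_add, map_smul, map_smul, h.1, h.2]
  push_cast
  module

lemma ActsOnPairBy.mul {x y : (I → ℚ) ≃ₗ[ℚ] (I → ℚ)} {N : Matrix (Fin 2) (Fin 2) ℤ}
    (hx : ActsOnPairBy i j x M) (hy : ActsOnPairBy i j y N) : ActsOnPairBy i j (x * y) (N * M) := by
  constructor
  · rw [LinearEquiv.mul_apply, hy.1, hx.apply_smul_add_smul]
    simp [Matrix.mul_apply, Fin.sum_univ_two]
  · rw [LinearEquiv.mul_apply, hy.2, hx.apply_smul_add_smul]
    simp [Matrix.mul_apply, Fin.sum_univ_two]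

lemma ActsOnPairBy.inv {x : (I → ℚ) ≃ₗ[ℚ] (I → ℚ)} {N : Matrix (Fin 2) (Fin 2) ℤ}
    (hx : ActsOnPairBy i j x M) (hNM : N * M = 1) : ActsOnPairBy i j x⁻¹ N := by
  have hrow : ∀ a b, (N * M) a b = N a 0 * M 0 b + N a 1 * M 1 b := fun a b => by
    simp [Matrix.mul_apply, Fin.sum_univ_two]
  constructor
  · refine x.injective ?_
    rw [hx.apply_smul_add_smul, ← hrow, ← hrow, hNM]
    simp
  · refine x.injective ?_
    rw [hx.apply_smul_add_smul, ← hrow, ← hrow, hNM]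
    simp

lemma ActsOnPairBy.of_nonpos (hij : i ≠ j) (h : ActsOnPairBy i j w M) (hM : M ∈ dihedralA2)
    (hwi : ∀ k, w (sr i) k ≤ 0) (hwj : ∀ k, w (sr j) k ≤ 0) :
    w (sr i) = -sr j ∧ w (sr j) = -sr i := by
  have h00 := hwi i
  have h01 := hwi j
  have h10 := hwj i
  have h11 := hwj j
  rw [h.1, smul_sr_add_smul_sr_apply_left hij] at h00
  rw [h.1, smul_sr_add_smul_sr_apply_right hij] at h01
  rw [h.2, smul_sr_add_smul_sr_apply_left hij] at h10
  rw [h.2, smul_sr_add_smul_sr_apply_right hij] at h11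
  obtain rfl := dihedralA2_eq_of_nonpos M hM (by exact_mod_cast h00) (by exact_mod_cast h01)
    (by exact_mod_cast h10) (by exact_mod_cast h11)
  constructor <;> simp [h.1, h.2]

lemma ActsOnPairBy.of_apply_sr_right (hij : i ≠ j) (h : ActsOnPairBy i j w M)
    (hM : M ∈ dihedralA2) (hwj : w (sr j) = -sr j) : w (sr i) = sr i + sr j := by
  have h10 := congrFun (h.2.symm.trans hwj) i
  have h11 := congrFun (h.2.symm.trans hwj) j
  rw [smul_sr_add_smul_sr_apply_left hij] at h10
  rw [smul_sr_add_smul_sr_apply_right hij] at h11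
  simp [sr, hij] at h10 h11
  obtain rfl := dihedralA2_eq_of_row_one M hM (by exact_mod_cast h10) (by exact_mod_cast h11)
  simp [h.1]

end PairAction

section Parabolic

variable [Fintype I] [DecidableEq I] {A : I → I → ℤ}
  {s : I → ((I → ℚ) ≃ₗ[ℚ] (I → ℚ))} {i j : I}

lemma IsReflRep.exists_actsOnPairBy (hs : IsReflRep A s)
    (hii : A i i = 2) (hjj : A j j = 2) (hij : A i j = -1) (hji : A j i = -1) {Y : Set I}
    (hY : ∀ k ∈ Y, k ≠ i → k ≠ j → A k i = 0 ∧ A k j = 0)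
    {w : (I → ℚ) ≃ₗ[ℚ] (I → ℚ)} (hw : w ∈ Wpara s Y) :
    ∃ M ∈ dihedralA2, ActsOnPairBy i j w M := by
  induction hw using Subgroup.closure_induction with
  | mem x hx =>
    obtain ⟨k, hk, rfl⟩ := hx
    by_cases hki : k = i
    · subst hki
      exact ⟨!![-1, 0; 1, 1], by simp [dihedralA2], by simp [hs.apply_sr, hii]; module,
        by simp [hs.apply_sr, hij, add_comm]⟩
    by_cases hkj : k = j
    · subst hkj
      exact ⟨!![1, 1; 0, -1], by simp [dihedralA2], by simp [hs.apply_sr, hji],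
        by simp [hs.apply_sr, hjj]; module⟩
    obtain ⟨hki0, hkj0⟩ := hY k hk hki hkj
    exact ⟨1, by simp [dihedralA2], by simp [hs.apply_sr, hki0], by simp [hs.apply_sr, hkj0]⟩
  | one => exact ⟨1, by simp [dihedralA2], actsOnPairBy_one⟩
  | mul x y _ _ ihx ihy =>
    obtain ⟨M, hM, hx⟩ := ihx
    obtain ⟨N, hN, hy⟩ := ihy
    exact ⟨N * M, dihedralA2_mul_mem N hN M hM, hx.mul hy⟩
  | inv x _ ihx =>
    obtain ⟨M, hM, hx⟩ := ihx
    obtain ⟨N, hN, hNM⟩ := dihedralA2_exists_inv M hM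
    exact ⟨N, hN, hx.inv hNM⟩

end Parabolic

/-- Let `(X, τ)` be a compatible decoration which is NOT a generalized Satake diagram,
witnessed by `i ∈ I \ X` with `τ i = i` and `j ∈ X` such that `{i, j}` is a connected
component of `X[i] = X ∪ {i}` of type `A₂`.  Then `s̃ᵢ := w_X ⬝ w_{X[i]}` acts on the span
of `αᵢ, αⱼ` as `sᵢ sⱼ`, which has order 3, and `s̃ᵢ` does not stabilize `V^σ`: indeed
`s̃ᵢ (ᾱᵢ) = (αⱼ − αᵢ)/2` is not `σ`-fixed. -/
theorem not_gsatake_witness {I : Type} [Fintype I] [DecidableEq I]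
    (A : I → I → ℤ) (hA : IsGCM A)
    (s : I → ((I → ℚ) ≃ₗ[ℚ] (I → ℚ))) (hs : IsReflRep A s)
    (X : Set I) (τ : Equiv.Perm I) (tV wX : (I → ℚ) ≃ₗ[ℚ] (I → ℚ))
    (hcd : IsCompatibleDec A s X τ tV wX)
    (i j : I) (hi : i ∉ X) (hτi : τ i = i) (hj : j ∈ X)
    (hij : A i j = -1) (hji : A j i = -1)
    (hcomp : ∀ k ∈ X, k ≠ j → A i k = 0 ∧ A j k = 0)
    (wXi : (I → ℚ) ≃ₗ[ℚ] (I → ℚ))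
    (hwXimem : wXi ∈ Wpara s (X ∪ {i}))
    (hwXilong : ∀ j' ∈ X ∪ {i}, ∀ k, wXi (sr j') k ≤ 0) :
    -- s̃ᵢ acts on span{αᵢ, αⱼ} as sᵢ sⱼ :
    (wX * wXi) (sr i) = s i (s j (sr i)) ∧
    (wX * wXi) (sr j) = s i (s j (sr j)) ∧
    -- sᵢ sⱼ has order 3 :
    orderOf (s i * s j) = 3 ∧
    -- s̃ᵢ (ᾱᵢ) = (αⱼ − αᵢ)/2, which is not σ-fixed :
    (wX * wXi) (bar (σmap wX tV) (sr i)) = (2⁻¹ : ℚ) • (sr j - sr i) ∧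
    σmap wX tV ((2⁻¹ : ℚ) • (sr j - sr i)) ≠ (2⁻¹ : ℚ) • (sr j - sr i) := by
  obtain ⟨hA2, -, hA0⟩ := hA
  obtain ⟨hAτ, -, hτX, htV, -, hwXmem, -, hwXneg⟩ := hcd
  have hij' : i ≠ j := fun h => hi (h ▸ hj)
  have hτj : τ j = j := by
    by_contra hne
    have := hAτ i j
    rw [hτi, (hcomp (τ j) (hτX j hj) hne).1, hij] at this
    omega
  have hY : ∀ k ∈ X ∪ {i}, k ≠ i → k ≠ j → A k i = 0 ∧ A k j = 0 := fun k hk hki hkj => by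
    have hkX : k ∈ X := hk.resolve_right hki
    exact ⟨hA0 _ _ (hcomp k hkX hkj).1, hA0 _ _ (hcomp k hkX hkj).2⟩
  have hpair : ∀ w ∈ Wpara s (X ∪ {i}), ∃ M ∈ dihedralA2, ActsOnPairBy i j w M :=
    fun _ hw => hs.exists_actsOnPairBy (hA2 i) (hA2 j) hij hji hY hw
  obtain ⟨M, hM, hXi⟩ := hpair _ hwXimem
  obtain ⟨hwXi_i, hwXi_j⟩ := hXi.of_nonpos hij' hM (hwXilong i (Or.inr rfl))
    (hwXilong j (Or.inl hj))
  have hwX_j : wX (sr j) = -sr j := by rw [hwXneg j hj, hτj]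
  obtain ⟨N, hN, hX⟩ := hpair _ (Subgroup.closure_mono (Set.image_mono Set.subset_union_left) hwXmem)
  have hwX_i := hX.of_apply_sr_right hij' hN hwX_j
  have htV_i : tV (sr i) = sr i := by rw [htV, hτi]
  have htV_j : tV (sr j) = sr j := by rw [htV, hτj]
  refine ⟨?_, ?_, hs.orderOf_mul_eq_three hij' (hA2 i) (hA2 j) hij hji, ?_, ?_⟩
  all_goals simp only [LinearEquiv.mul_apply, bar, σmap, map_add, map_sub, map_neg, map_smul,
    hs.apply_sr, hA2, hij, hji, hwXi_i, hwXi_j, hwX_i, hwX_j, htV_i, htV_j]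
  · push_cast; module
  · push_cast; module
  · module
  · intro h
    have := congrFun h j
    norm_num [sr, hij'] at this

end KMStmt
end

section
/- Let (X,τ) be a compatible decoration with W^σ = {w ∈ W : w∘σ = σ∘w} and W^X the minimal-length left coset representatives of W_X in W. Then (W^X)^σ = {w ∈ W^X : σwσ = w} equals the τ-fixed points of the normalizer 𝒲 = N_{W^X}(W_X) = {w ∈ W^X : wW_X = W_Xw}. In particular W^σ = W_X · 𝒲^τ with W_X ∩ 𝒲^τ = {1}. -/
/-!
The exchange condition comes from Tits' reflection cocycle: letting `s i` act on `W × ZMod 2` by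
`(t, e) ↦ (s i t s i, e + [t = s i])` respects the Coxeter relations, and the resulting cocycle
`η w t` is the number of occurrences, mod 2, of `t` in the right inversion sequence of any word
for `w`. Hence `η w t = 1` exactly when `t` is a right inversion of `w`, and the cocycle identity
becomes the product rule `N(vw) = N(w) Δ w⁻¹ N(v) w` for inversion sets. For `W_X` it shows that
left inversions of elements of `W_X` lie in `W_X`, that `ℓ(uv) = ℓ u + ℓ v` for `u ∈ W_X` and
`v ∈ W^X`, and that `ℓ(u w_X) = ℓ w_X - ℓ u`, so `w_X` is the only element of `W_X` of its length.

The paper's `W^σ` is `twistedCentralizer w_X φ = {w | w_X w = φ(w) w_X}`, a subgroup containing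
`W_X`. For `w ∈ W^X ∩ W^σ`, applying the isometry `φ` gives `ℓ(w w_X) = ℓ(w_X w) = ℓ w_X + ℓ w`,
while `ℓ(s_j w w_X) = ℓ(w_X s_j w)` is one less; so `w⁻¹ s_j w` is a left inversion of `w_X`, hence
in `W_X`. The same for `w⁻¹` shows that `w` normalizes `W_X`, and comparing lengths in
`φ(w) = (w_X · w w_X⁻¹ w⁻¹) w` forces `φ(w) = w`. Conversely, if `w` normalizes `W_X`, then
`w w_X w⁻¹ ∈ W_X` has the length of `w_X`, hence equals it. Minimal coset representatives then
give `W^σ = W_X · 𝒲^τ`.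
-/

theorem mul_mul_inv_eq_iff_eq_inv_mul_mul {G : Type*} [Group G] (g t x : G) :
    g * t * g⁻¹ = x ↔ t = g⁻¹ * x * g := by
  constructor <;> rintro rfl <;> group

theorem Function.Periodic.sum_range_two_mul_eq_zero {R : Type*} [Ring R] [CharP R 2] {f : ℕ → R}
    {n : ℕ} (hf : Function.Periodic f n) : ∑ k ∈ Finset.range (2 * n), f k = 0 := by
  have hf' (k : ℕ) : f (n + k) = f k := by rw [add_comm, hf]
  simp only [two_mul, Finset.sum_range_add, hf', CharTwo.add_self_eq_zero]

namespace Subgroup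

variable {G F : Type*} [Group G] [FunLike F G G] [MonoidHomClass F G G]

def twistedCentralizer (a : G) (φ : F) : Subgroup G where
  carrier := {g | a * g = φ g * a}
  one_mem' := by simp
  mul_mem' {x y} hx hy := by
    simp only [Set.mem_ofPred_eq, map_mul] at *
    rw [← mul_assoc, hx, mul_assoc, hy, mul_assoc]
  inv_mem' {x} hx := by
    simp only [Set.mem_ofPred_eq, map_inv] at *
    rw [eq_inv_mul_iff_mul_eq, ← mul_assoc, ← hx, mul_inv_cancel_right]

theorem mem_twistedCentralizer {a g : G} {φ : F} :
    g ∈ twistedCentralizer a φ ↔ a * g = φ g * a := Iff.rfl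

theorem mul_mul_inv_mem_of_mem_closure {S : Set G} {K : Subgroup G} {x : G}
    (h : ∀ a ∈ S, x * a * x⁻¹ ∈ K) {u : G} (hu : u ∈ closure S) : x * u * x⁻¹ ∈ K :=
  (closure_le (K.comap (MulAut.conj x).toMonoidHom)).mpr h hu

end Subgroup

namespace CoxeterSystem

variable {B W : Type*} [Group W] {M : CoxeterMatrix B} (cs : CoxeterSystem M W)

local prefix:100 "s" => cs.simple
local prefix:100 "π" => cs.wordProd
local prefix:100 "ℓ" => cs.length
local prefix:100 "ris " => cs.rightInvSeq

open Classical in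
noncomputable def reflectionPerm (i : B) : Equiv.Perm (W × ZMod 2) :=
  Function.Involutive.toPerm (fun p => (s i * p.1 * s i, p.2 + if p.1 = s i then 1 else 0)) <| by
    rintro ⟨t, e⟩
    have hfix : s i * t * s i = s i ↔ t = s i := by
      constructor
      · intro h; simpa [mul_assoc] using congrArg (s i * · * s i) h
      · rintro rfl; simp
    simp only [Prod.mk.injEq, hfix]
    refine ⟨by simp [mul_assoc], ?_⟩
    split_ifs <;> simp [add_assoc, CharTwo.add_self_eq_zero]

open Classical in
theorem reflectionPerm_apply (i : B) (t : W) (e : ZMod 2) :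
    cs.reflectionPerm i (t, e) = (s i * t * s i, e + if t = s i then 1 else 0) := rfl

open Classical in
theorem reflectionPerm_mul_pow_apply (i j : B) (m : ℕ) (t : W) (e : ZMod 2) :
    ((cs.reflectionPerm i * cs.reflectionPerm j) ^ m) (t, e) =
      ((s i * s j) ^ m * t * (s j * s i) ^ m,
        e + ∑ k ∈ Finset.range (2 * m), if t = (s j * s i) ^ k * s j then 1 else 0) := by
  induction m generalizing t e with
  | zero => simp
  | succ m ih =>
    set a := s i * s j
    set b := s j * s i
    have hinv : b ^ m = (a ^ m)⁻¹ := by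
      rw [← inv_pow, mul_inv_rev, inv_simple, inv_simple]
    have hsemi : s j * a ^ m = b ^ m * s j :=
      SemiconjBy.pow_right (show s j * a = b * s j by simp only [a, b, mul_assoc]) m
    have hg : (s j * a ^ m)⁻¹ = b ^ m * s j := by
      rw [mul_inv_rev, inv_simple, hinv]
    have h₁ : a ^ m * t * b ^ m = s j ↔ t = b ^ (2 * m) * s j := by
      rw [hinv, mul_mul_inv_eq_iff_eq_inv_mul_mul, ← hinv, mul_assoc, hsemi, two_mul, pow_add,
        mul_assoc]
    have h₂ : s j * (a ^ m * t * b ^ m) * s j = s i ↔ t = b ^ (2 * m + 1) * s j := by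
      rw [show s j * (a ^ m * t * b ^ m) * s j = (s j * a ^ m) * t * (s j * a ^ m)⁻¹ by
          rw [hg]; group,
        mul_mul_inv_eq_iff_eq_inv_mul_mul, hg, hsemi, show 2 * m + 1 = m + 1 + m by ring,
        pow_add, pow_succ]
      simp only [b, mul_assoc]
    rw [pow_succ', Equiv.Perm.mul_apply, Equiv.Perm.mul_apply, ih, reflectionPerm_apply,
      reflectionPerm_apply, Prod.mk.injEq, h₁, h₂, show 2 * (m + 1) = 2 * m + 1 + 1 by ring,
      Finset.sum_range_succ, Finset.sum_range_succ]
    refine ⟨?_, by simp only [add_assoc]⟩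
    rw [pow_succ' a, pow_succ b]
    simp only [a, b]
    group

theorem isLiftable_reflectionPerm : M.IsLiftable cs.reflectionPerm := by
  intro i j
  have hperiod (k : ℕ) : (s j * s i) ^ (k + M i j) = (s j * s i) ^ k := by
    rw [pow_add, simple_mul_simple_pow', mul_one]
  ext ⟨t, e⟩ : 1
  rw [reflectionPerm_mul_pow_apply, Function.Periodic.sum_range_two_mul_eq_zero]
  · simp
  · intro k
    beta_reduce
    rw [hperiod]

noncomputable def reflectionRep : W →* Equiv.Perm (W × ZMod 2) :=
  cs.lift ⟨cs.reflectionPerm, cs.isLiftable_reflectionPerm⟩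

noncomputable def inversionCocycle (w t : W) : ZMod 2 := (cs.reflectionRep w (t, 0)).2

theorem reflectionRep_apply (w t : W) (e : ZMod 2) :
    cs.reflectionRep w (t, e) = (w * t * w⁻¹, e + cs.inversionCocycle w t) := by
  induction w using cs.simple_induction_left generalizing t e with
  | one => simp [inversionCocycle]
  | mul_simple_left w i ih =>
    have hstep (e : ZMod 2) : cs.reflectionRep (s i * w) (t, e) =
        cs.reflectionPerm i (w * t * w⁻¹, e + cs.inversionCocycle w t) := by
      rw [map_mul, Equiv.Perm.mul_apply, ih, reflectionRep, lift_apply_simple]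
    rw [inversionCocycle, hstep, hstep, reflectionPerm_apply, reflectionPerm_apply]
    simp [mul_assoc, add_assoc]

theorem inversionCocycle_mul (v w t : W) :
    cs.inversionCocycle (v * w) t =
      cs.inversionCocycle w t + cs.inversionCocycle v (w * t * w⁻¹) := by
  have := congrArg Prod.snd (cs.reflectionRep_apply (v * w) t 0)
  rw [map_mul, Equiv.Perm.mul_apply, reflectionRep_apply, reflectionRep_apply] at this
  simpa using this.symm

theorem inversionCocycle_one (t : W) : cs.inversionCocycle 1 t = 0 := by
  simp [inversionCocycle]

open Classical in
theorem inversionCocycle_simple (i : B) (t : W) :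
    cs.inversionCocycle (s i) t = if t = s i then 1 else 0 := by
  simp [inversionCocycle, reflectionRep, reflectionPerm_apply]

open Classical in
theorem inversionCocycle_wordProd (ω : List B) (t : W) :
    cs.inversionCocycle (π ω) t = (ris ω).count t := by
  induction ω generalizing t with
  | nil => simp [inversionCocycle_one]
  | cons i ω ih =>
    rw [wordProd_cons, inversionCocycle_mul, ih, inversionCocycle_simple, rightInvSeq.eq_2,
      List.count_cons, mul_mul_inv_eq_iff_eq_inv_mul_mul]
    by_cases h : t = (π ω)⁻¹ * s i * π ω
    · simp [h]
    · simp [h, Ne.symm h]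

theorem inversionCocycle_self {t : W} (ht : cs.IsReflection t) : cs.inversionCocycle t t = 1 := by
  obtain ⟨w, i, rfl⟩ := ht
  -- expand `η(w s w⁻¹, ·)` by the cocycle identity; the `w`-terms cancel since `η(w w⁻¹, ·) = 0`
  have h₁ := cs.inversionCocycle_mul (w * s i) w⁻¹ (w * s i * w⁻¹)
  have h₂ := cs.inversionCocycle_mul w (s i) (s i)
  have h₃ := cs.inversionCocycle_mul w w⁻¹ (w * s i * w⁻¹)
  simp only [mul_inv_cancel, inversionCocycle_one, inv_inv, inversionCocycle_simple, mul_assoc,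
    inv_mul_cancel_left, inv_mul_cancel, mul_one, one_mul, simple_mul_simple_self, inv_simple,
    if_true] at h₁ h₂ h₃ ⊢
  linear_combination h₁ + h₂ - h₃

theorem mem_rightInvSeq_of_inversionCocycle_eq_one {ω : List B} {t : W}
    (h : cs.inversionCocycle (π ω) t = 1) : t ∈ ris ω := by
  classical
  rw [inversionCocycle_wordProd] at h
  refine List.count_pos_iff.mp (Nat.pos_of_ne_zero fun h₀ => ?_)
  simp [h₀] at h

theorem inversionCocycle_eq_one_iff {w t : W} :
    cs.inversionCocycle w t = 1 ↔ cs.IsRightInversion w t := by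
  have forward {w : W} (h : cs.inversionCocycle w t = 1) : cs.IsRightInversion w t := by
    obtain ⟨ω, hω, rfl⟩ := cs.exists_isReduced w
    exact cs.isRightInversion_of_mem_rightInvSeq hω
      (cs.mem_rightInvSeq_of_inversionCocycle_eq_one h)
  refine ⟨forward, fun hwt => ?_⟩
  by_contra hne
  have h₀ : cs.inversionCocycle w t = 0 := by
    generalize cs.inversionCocycle w t = x at hne
    revert x; decide
  have : cs.inversionCocycle (w * t) t = 1 := by
    rw [inversionCocycle_mul, cs.inversionCocycle_self hwt.1, mul_inv_cancel_right, h₀, add_zero]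
  exact (hwt.1.isRightInversion_mul_left_iff.mp (forward this)) hwt

theorem isRightInversion_mul_iff {v w t : W} :
    cs.IsRightInversion (v * w) t ↔
      Xor (cs.IsRightInversion w t) (cs.IsRightInversion v (w * t * w⁻¹)) := by
  simp only [← inversionCocycle_eq_one_iff, inversionCocycle_mul]
  generalize cs.inversionCocycle w t = x
  generalize cs.inversionCocycle v (w * t * w⁻¹) = y
  revert x y; decide

theorem isLeftInversion_mul_iff {v w t : W} :
    cs.IsLeftInversion (v * w) t ↔
      Xor (cs.IsLeftInversion v t) (cs.IsLeftInversion w (v⁻¹ * t * v)) := by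
  simp only [← isRightInversion_inv_iff, mul_inv_rev, isRightInversion_mul_iff, inv_inv]

theorem mem_rightInvSeq_of_isRightInversion {ω : List B} {t : W}
    (h : cs.IsRightInversion (π ω) t) : t ∈ ris ω :=
  cs.mem_rightInvSeq_of_inversionCocycle_eq_one (cs.inversionCocycle_eq_one_iff.mpr h)

theorem exists_isReduced_sublist (ω : List B) :
    ∃ ρ, ρ.Sublist ω ∧ cs.IsReduced ρ ∧ π ρ = π ω := by
  induction ω using List.reverseRecOn with
  | nil => exact ⟨[], List.Sublist.slnil, by simp [IsReduced], rfl⟩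
  | append_singleton ω i ih =>
    obtain ⟨ρ, hsub, hρ, hπ⟩ := ih
    rcases cs.length_mul_simple (π ρ) i with hlen | hlen
    · refine ⟨ρ ++ [i], hsub.append (List.Sublist.refl _), ?_, by simp [wordProd_append, hπ]⟩
      simp [IsReduced, wordProd_append, hlen, hρ.eq]
    · obtain ⟨j, hj, hget⟩ := List.mem_iff_getElem.mp <|
        cs.mem_rightInvSeq_of_isRightInversion (ω := ρ) ⟨cs.isReflection_simple i, by omega⟩
      have hdel := cs.wordProd_mul_getD_rightInvSeq ρ j
      rw [List.getD_eq_getElem _ 1 hj, hget] at hdel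
      rw [length_rightInvSeq] at hj
      refine ⟨ρ.eraseIdx j, ((List.eraseIdx_sublist ρ j).trans hsub).trans
        (List.sublist_append_left ω [i]), ?_, by simp [wordProd_append, ← hdel, hπ]⟩
      have := List.length_eraseIdx_add_one hj
      rw [IsReduced, ← hdel]
      have := hρ.eq
      omega

theorem isLeftDescent_mul_iff {u v : W} {j : B} (hu : ¬cs.IsLeftDescent u j) :
    cs.IsLeftDescent (u * v) j ↔ cs.IsLeftInversion v (u⁻¹ * s j * u) := by
  rw [← isLeftInversion_simple_iff_isLeftDescent, isLeftInversion_mul_iff,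
    isLeftInversion_simple_iff_isLeftDescent]
  simp [hu]

section Parabolic

variable (X : Set B)

local notation "P" => Subgroup.closure (cs.simple '' X)

theorem wordProd_mem_closure {ω : List B} (hω : ∀ i ∈ ω, i ∈ X) : π ω ∈ P := by
  rw [wordProd]
  refine Subgroup.list_prod_mem _ fun _ hx => ?_
  obtain ⟨i, hi, rfl⟩ := List.mem_map.mp hx
  exact Subgroup.subset_closure ⟨i, hω i hi, rfl⟩

theorem exists_isReduced_of_mem_closure {u : W} (hu : u ∈ P) :
    ∃ ω, cs.IsReduced ω ∧ (∀ i ∈ ω, i ∈ X) ∧ π ω = u := by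
  obtain ⟨ω, hX, rfl⟩ : ∃ ω : List B, (∀ i ∈ ω, i ∈ X) ∧ π ω = u := by
    induction hu using Subgroup.closure_induction with
    | mem x hx =>
      obtain ⟨j, hj, rfl⟩ := hx
      exact ⟨[j], by simpa using hj, wordProd_singleton cs j⟩
    | one => exact ⟨[], by simp, wordProd_nil cs⟩
    | mul x y _ _ ihx ihy =>
      obtain ⟨ω₁, h₁, rfl⟩ := ihx
      obtain ⟨ω₂, h₂, rfl⟩ := ihy
      exact ⟨ω₁ ++ ω₂, fun i hi => (List.mem_append.mp hi).elim (h₁ i) (h₂ i),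
        wordProd_append cs ω₁ ω₂⟩
    | inv x _ ih =>
      obtain ⟨ω, h, rfl⟩ := ih
      exact ⟨ω.reverse, fun i hi => h i (List.mem_reverse.mp hi), wordProd_reverse cs ω⟩
  obtain ⟨ρ, hsub, hρ, hπ⟩ := cs.exists_isReduced_sublist ω
  exact ⟨ρ, hρ, fun i hi => hX i (hsub.subset hi), hπ⟩

theorem closure_simple_induction_left {motive : (u : W) → u ∈ P → Prop}
    (one : motive 1 (one_mem _))
    (simple_mul : ∀ u hu, ∀ j (hj : j ∈ X), ¬cs.IsLeftDescent u j → motive u hu →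
      motive (s j * u) (mul_mem (Subgroup.subset_closure ⟨j, hj, rfl⟩) hu))
    {u : W} (hu : u ∈ P) : motive u hu := by
  obtain ⟨ω, hω, hX, rfl⟩ := cs.exists_isReduced_of_mem_closure X hu
  induction ω with
  | nil => simpa using one
  | cons j ω ih =>
    have hω' : cs.IsReduced ω := by simpa using hω.drop 1
    have hX' : ∀ i ∈ ω, i ∈ X := fun i hi => hX i (.tail j hi)
    simp only [wordProd_cons]
    refine simple_mul _ (cs.wordProd_mem_closure X hX') j (hX j List.mem_cons_self) ?_
      (ih hω' hX' _)
    rw [not_isLeftDescent_iff, hω'.eq, ← wordProd_cons, hω.eq, List.length_cons]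

theorem exists_isLeftDescent_of_mem_closure {u : W} (hu : u ∈ P) (h1 : u ≠ 1) :
    ∃ j ∈ X, cs.IsLeftDescent u j := by
  induction hu using cs.closure_simple_induction_left X with
  | one => exact absurd rfl h1
  | simple_mul u _ j hj hnot =>
    exact ⟨j, hj, cs.isLeftDescent_iff_not_isLeftDescent_mul.mpr (by
      rwa [simple_mul_simple_cancel_left])⟩

theorem mem_closure_of_isLeftInversion {u t : W} (hu : u ∈ P) (ht : cs.IsLeftInversion u t) :
    t ∈ P := by
  induction hu using cs.closure_simple_induction_left X generalizing t with
  | one => exact absurd ht.2 (by simp)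
  | simple_mul u _ j hj _ ih =>
    have hsj : s j ∈ P := Subgroup.subset_closure ⟨j, hj, rfl⟩
    rcases cs.isLeftInversion_mul_iff.mp ht with ⟨hj', -⟩ | ⟨hu', -⟩
    · have : t * s j = 1 := cs.length_eq_zero_iff.mp (by simpa [length_simple] using hj'.2)
      rw [mul_eq_one_iff_eq_inv.mp this, inv_simple]
      exact hsj
    · simpa [mul_assoc] using mul_mem (mul_mem hsj (ih hu')) hsj

theorem length_mul_of_forall_not_isLeftInversion {v : W}
    (hv : ∀ t ∈ P, ¬cs.IsLeftInversion v t) {u : W} (hu : u ∈ P) :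
    ℓ (u * v) = ℓ u + ℓ v := by
  induction hu using cs.closure_simple_induction_left X with
  | one => simp
  | simple_mul u hu j hj hnot ih =>
    have hsj : s j ∈ P := Subgroup.subset_closure ⟨j, hj, rfl⟩
    have : ¬cs.IsLeftDescent (u * v) j := fun h =>
      hv _ (mul_mem (mul_mem (inv_mem hu) hsj) hu) ((cs.isLeftDescent_mul_iff hnot).mp h)
    rw [mul_assoc, cs.not_isLeftDescent_iff.mp this, cs.not_isLeftDescent_iff.mp hnot, ih]
    omega

theorem length_mul_add_of_forall_isLeftInversion {v : W}
    (hv : ∀ t ∈ P, cs.IsReflection t → cs.IsLeftInversion v t) {u : W} (hu : u ∈ P) :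
    ℓ (u * v) + ℓ u = ℓ v := by
  induction hu using cs.closure_simple_induction_left X with
  | one => simp
  | simple_mul u hu j hj hnot ih =>
    have hsj : s j ∈ P := Subgroup.subset_closure ⟨j, hj, rfl⟩
    have : cs.IsLeftDescent (u * v) j := (cs.isLeftDescent_mul_iff hnot).mpr
      (hv _ (mul_mem (mul_mem (inv_mem hu) hsj) hu) (by
        simpa using (cs.isReflection_simple j).conj u⁻¹))
    rw [mul_assoc, cs.not_isLeftDescent_iff.mp hnot]
    have := cs.isLeftDescent_iff.mp this
    omega

theorem exists_mem_closure_forall_length_le (w : W) :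
    ∃ u ∈ P, ∀ p ∈ P, ℓ (u * w) ≤ ℓ (p * w) :=
  ⟨_, Function.argminOn_mem _ (P : Set W) ⟨1, one_mem _⟩,
    fun _ hp => Function.argminOn_le (fun p => ℓ (p * w)) (P : Set W) hp⟩

theorem lt_length_simple_mul_of_forall_length_le {v : W} (hv : ∀ p ∈ P, ℓ v ≤ ℓ (p * v))
    {j : B} (hj : j ∈ X) : ℓ v < ℓ (s j * v) :=
  lt_of_le_of_ne (hv _ (Subgroup.subset_closure ⟨j, hj, rfl⟩)) (cs.length_simple_mul_ne v j).symm

theorem length_le_length_mul_of_forall_lt_length_simple_mul {v : W}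
    (hv : ∀ j ∈ X, ℓ v < ℓ (s j * v)) {p : W} (hp : p ∈ P) : ℓ v ≤ ℓ (p * v) := by
  obtain ⟨u, hu, hmin⟩ := cs.exists_mem_closure_forall_length_le X v
  have hadd {x : W} (hx : x ∈ P) : ℓ (x * (u * v)) = ℓ x + ℓ (u * v) :=
    cs.length_mul_of_forall_not_isLeftInversion X (fun t ht h => (h.2.trans_le
      (by simpa [mul_assoc] using hmin _ (mul_mem ht hu))).false) hx
  obtain rfl : u = 1 := by
    by_contra hu1
    obtain ⟨j, hj, hdesc⟩ :=
      cs.exists_isLeftDescent_of_mem_closure X (inv_mem hu) (inv_ne_one.mpr hu1)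
    have h₁ := hadd (mul_mem (Subgroup.subset_closure ⟨j, hj, rfl⟩) (inv_mem hu))
    have h₂ := hadd (inv_mem hu)
    simp only [mul_assoc, inv_mul_cancel_left] at h₁ h₂
    have := hv j hj
    have := cs.isLeftDescent_iff.mp hdesc
    omega
  simpa using hmin p hp

theorem length_mul_of_forall_lt_length_simple_mul {v : W}
    (hv : ∀ j ∈ X, ℓ v < ℓ (s j * v)) {u : W} (hu : u ∈ P) : ℓ (u * v) = ℓ u + ℓ v :=
  cs.length_mul_of_forall_not_isLeftInversion X (fun _ ht h =>
    (h.2.trans_le (cs.length_le_length_mul_of_forall_lt_length_simple_mul X hv ht)).false) hu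

theorem isLeftInversion_of_forall_length_le {wX : W} (hwX : wX ∈ P) (hlong : ∀ u ∈ P, ℓ u ≤ ℓ wX)
    {t : W} (ht : t ∈ P) (hrefl : cs.IsReflection t) : cs.IsLeftInversion wX t :=
  ⟨hrefl, lt_of_le_of_ne (hlong _ (mul_mem ht hwX)) (hrefl.length_mul_right_ne wX)⟩

theorem length_mul_add_of_forall_length_le {wX : W} (hwX : wX ∈ P)
    (hlong : ∀ u ∈ P, ℓ u ≤ ℓ wX) {u : W} (hu : u ∈ P) : ℓ (u * wX) + ℓ u = ℓ wX :=
  cs.length_mul_add_of_forall_isLeftInversion X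
    (fun _ => cs.isLeftInversion_of_forall_length_le X hwX hlong) hu

theorem eq_of_length_eq_of_forall_length_le {wX : W} (hwX : wX ∈ P)
    (hlong : ∀ u ∈ P, ℓ u ≤ ℓ wX) {c : W} (hc : c ∈ P) (hlen : ℓ c = ℓ wX) : c = wX := by
  have h := cs.length_mul_add_of_forall_length_le X hwX hlong (inv_mem hc)
  rw [length_inv, hlen, Nat.add_eq_right, length_eq_zero_iff, inv_mul_eq_one] at h
  exact h

end Parabolic

theorem length_map_le {τ : B → B} (f : W →* W) (hf : ∀ i, f (s i) = s (τ i)) (w : W) :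
    ℓ (f w) ≤ ℓ w := by
  obtain ⟨ω, hω, rfl⟩ := cs.exists_isReduced w
  have : f (π ω) = π (ω.map τ) := by
    simp only [wordProd, map_list_prod, List.map_map]
    congr 1
    exact List.map_congr_left fun i _ => hf i
  rw [this, hω.eq, ← List.length_map (f := τ)]
  exact cs.length_wordProd_le _

theorem length_map_eq {τ : Equiv.Perm B} {φ : W ≃* W} (hφs : ∀ i, φ (s i) = s (τ i)) (w : W) :
    ℓ (φ w) = ℓ w := by
  have hφs' (i : B) : φ.symm (s i) = s (τ.symm i) := by
    rw [MulEquiv.symm_apply_eq, hφs, Equiv.apply_symm_apply]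
  refine le_antisymm (cs.length_map_le φ.toMonoidHom hφs w) ?_
  simpa using cs.length_map_le φ.symm.toMonoidHom hφs' (φ w)

open Subgroup

section Twisted

variable (X : Set B) {τ : Equiv.Perm B} {φ : W ≃* W} {wX : W}

local notation "P" => Subgroup.closure (cs.simple '' X)

theorem closure_le_twistedCentralizer (hφs : ∀ i, φ (s i) = s (τ i)) (hwX2 : wX * wX = 1)
    (hoi : ∀ i ∈ X, wX * s i * wX = s (τ i)) : P ≤ twistedCentralizer wX φ := by
  refine (Subgroup.closure_le _).mpr ?_
  rintro _ ⟨i, hi, rfl⟩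
  rw [SetLike.mem_coe, mem_twistedCentralizer, hφs, ← hoi i hi, mul_assoc _ wX, hwX2, mul_one]

theorem length_mul_comm_of_mem_twistedCentralizer (hφs : ∀ i, φ (s i) = s (τ i))
    (hwX : wX ∈ twistedCentralizer wX φ) {x : W} (hx : x ∈ twistedCentralizer wX φ) :
    ℓ (x * wX) = ℓ (wX * x) := by
  have hφwX : φ wX = wX := mul_right_cancel (mem_twistedCentralizer.mp hwX).symm
  rw [← cs.length_map_eq hφs, map_mul, hφwX, ← mem_twistedCentralizer.mp hx]

theorem length_mul_of_mem_twistedCentralizer (hφs : ∀ i, φ (s i) = s (τ i))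
    (hP : P ≤ twistedCentralizer wX φ) (hwX : wX ∈ P) {w : W}
    (hD : ∀ j ∈ X, ℓ w < ℓ (s j * w)) (hw : w ∈ twistedCentralizer wX φ) :
    ℓ (w * wX) = ℓ w + ℓ wX := by
  rw [cs.length_mul_comm_of_mem_twistedCentralizer hφs (hP hwX) hw,
    cs.length_mul_of_forall_lt_length_simple_mul X hD hwX, add_comm]

theorem inv_mul_simple_mul_mem_of_mem_twistedCentralizer (hφs : ∀ i, φ (s i) = s (τ i))
    (hP : P ≤ twistedCentralizer wX φ) (hwX : wX ∈ P) (hlong : ∀ u ∈ P, ℓ u ≤ ℓ wX) {w : W}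
    (hD : ∀ j ∈ X, ℓ w < ℓ (s j * w)) (hw : w ∈ twistedCentralizer wX φ) {j : B} (hj : j ∈ X) :
    w⁻¹ * s j * w ∈ P := by
  have hsj : s j ∈ P := Subgroup.subset_closure ⟨j, hj, rfl⟩
  have h₁ := cs.length_mul_of_mem_twistedCentralizer X hφs hP hwX hD hw
  have h₂ : ℓ (s j * w * wX) = ℓ (wX * s j) + ℓ w := by
    rw [cs.length_mul_comm_of_mem_twistedCentralizer hφs (hP hwX) (mul_mem (hP hsj) hw),
      ← mul_assoc, cs.length_mul_of_forall_lt_length_simple_mul X hD (mul_mem hwX hsj)]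
  have h₃ : ℓ (wX * s j) + 1 = ℓ wX := by
    rw [← cs.length_mul_comm_of_mem_twistedCentralizer hφs (hP hwX) (hP hsj),
      ← cs.length_simple j]
    exact cs.length_mul_add_of_forall_length_le X hwX hlong hsj
  have hdesc : cs.IsLeftDescent (w * wX) j := by
    rw [IsLeftDescent, ← mul_assoc]
    omega
  exact cs.mem_closure_of_isLeftInversion X hwX
    ((cs.isLeftDescent_mul_iff (hD j hj).not_gt).mp hdesc)

theorem lt_length_simple_mul_inv_of_mem_twistedCentralizer (hφs : ∀ i, φ (s i) = s (τ i))
    (hP : P ≤ twistedCentralizer wX φ) (hwX : wX ∈ P) (hlong : ∀ u ∈ P, ℓ u ≤ ℓ wX) {w : W}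
    (hD : ∀ j ∈ X, ℓ w < ℓ (s j * w)) (hw : w ∈ twistedCentralizer wX φ) {j : B} (hj : j ∈ X) :
    ℓ w⁻¹ < ℓ (s j * w⁻¹) := by
  have hsj : s j ∈ P := Subgroup.subset_closure ⟨j, hj, rfl⟩
  have h₁ := cs.length_mul_of_mem_twistedCentralizer X hφs hP hwX hD hw
  have h₂ := cs.length_mul_le (w * s j) (s j * wX)
  have h₃ := cs.length_mul_add_of_forall_length_le X hwX hlong hsj
  rw [length_simple] at h₃
  rw [mul_assoc, simple_mul_simple_cancel_left] at h₂
  rw [← inv_simple, ← mul_inv_rev, length_inv, length_inv]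
  omega

theorem mul_mul_inv_mem_of_mem_twistedCentralizer (hφs : ∀ i, φ (s i) = s (τ i))
    (hP : P ≤ twistedCentralizer wX φ) (hwX : wX ∈ P) (hlong : ∀ u ∈ P, ℓ u ≤ ℓ wX) {w : W}
    (hD : ∀ j ∈ X, ℓ w < ℓ (s j * w)) (hw : w ∈ twistedCentralizer wX φ) {u : W} (hu : u ∈ P) :
    w * u * w⁻¹ ∈ P ∧ w⁻¹ * u * w ∈ P := by
  have conj (x : W) (hx : ∀ j ∈ X, x * s j * x⁻¹ ∈ P) : x * u * x⁻¹ ∈ P :=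
    Subgroup.mul_mul_inv_mem_of_mem_closure (by rintro _ ⟨j, hj, rfl⟩; exact hx j hj) hu
  constructor
  · refine conj w fun j hj => ?_
    have hD' (j : B) (hj : j ∈ X) :=
      cs.lt_length_simple_mul_inv_of_mem_twistedCentralizer X hφs hP hwX hlong hD hw hj
    simpa using cs.inv_mul_simple_mul_mem_of_mem_twistedCentralizer X hφs hP hwX hlong hD'
      (inv_mem hw) hj
  · simpa using conj w⁻¹ fun j hj => by
      simpa using cs.inv_mul_simple_mul_mem_of_mem_twistedCentralizer X hφs hP hwX hlong hD hw hj

theorem map_eq_self_of_mem_twistedCentralizer (hφs : ∀ i, φ (s i) = s (τ i)) (hwX : wX ∈ P)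
    {w : W} (hD : ∀ j ∈ X, ℓ w < ℓ (s j * w)) (hw : w ∈ twistedCentralizer wX φ)
    (hnorm : ∀ u ∈ P, w * u * w⁻¹ ∈ P) : φ w = w := by
  have hφw : φ w = wX * (w * wX⁻¹ * w⁻¹) * w := by
    rw [eq_mul_inv_iff_mul_eq.mpr (mem_twistedCentralizer.mp hw).symm]
    group
  have h := cs.length_mul_of_forall_lt_length_simple_mul X hD
    (mul_mem hwX (hnorm _ (inv_mem hwX)))
  rw [← hφw, cs.length_map_eq hφs, right_eq_add, length_eq_zero_iff] at h
  rw [hφw, h, one_mul]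

theorem mem_twistedCentralizer_of_mul_mul_inv_mem (hwX : wX ∈ P) (hlong : ∀ u ∈ P, ℓ u ≤ ℓ wX)
    {w : W} (hD : ∀ j ∈ X, ℓ w < ℓ (s j * w)) (hnorm : ∀ u ∈ P, w * u * w⁻¹ ∈ P)
    (hφw : φ w = w) : w ∈ twistedCentralizer wX φ := by
  have hR (j : B) (hj : j ∈ X) : ℓ w⁻¹ < ℓ (s j * w⁻¹) := by
    have h := cs.length_mul_of_forall_lt_length_simple_mul X hD
      (hnorm _ (Subgroup.subset_closure ⟨j, hj, rfl⟩))
    rw [inv_mul_cancel_right] at h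
    rw [← inv_simple, ← mul_inv_rev, length_inv, length_inv]
    have := cs.length_mul_simple_ne w j
    omega
  have hc : w * wX * w⁻¹ = wX := by
    refine cs.eq_of_length_eq_of_forall_length_le X hwX hlong (hnorm _ hwX) ?_
    have h₁ := cs.length_mul_of_forall_lt_length_simple_mul X hD (hnorm _ hwX)
    have h₂ := cs.length_mul_of_forall_lt_length_simple_mul X hR (inv_mem hwX)
    rw [inv_mul_cancel_right] at h₁
    rw [← mul_inv_rev, length_inv, length_inv, length_inv] at h₂
    omega
  rw [mem_twistedCentralizer, hφw, ← hc, inv_mul_cancel_right, hc]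

theorem mem_twistedCentralizer_iff (hφs : ∀ i, φ (s i) = s (τ i))
    (hP : P ≤ twistedCentralizer wX φ) (hwX : wX ∈ P) (hlong : ∀ u ∈ P, ℓ u ≤ ℓ wX) {w : W}
    (hD : ∀ j ∈ X, ℓ w < ℓ (s j * w)) :
    w ∈ twistedCentralizer wX φ ↔
      (∀ u ∈ P, w * u * w⁻¹ ∈ P ∧ w⁻¹ * u * w ∈ P) ∧ φ w = w := by
  refine ⟨fun hw => ?_, fun ⟨hnorm, hφw⟩ => cs.mem_twistedCentralizer_of_mul_mul_inv_mem X hwX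
    hlong hD (fun u hu => (hnorm u hu).1) hφw⟩
  have hnorm (u : W) (hu : u ∈ P) :=
    cs.mul_mul_inv_mem_of_mem_twistedCentralizer X hφs hP hwX hlong hD hw hu
  exact ⟨hnorm, cs.map_eq_self_of_mem_twistedCentralizer X hφs hwX hD hw
    fun u hu => (hnorm u hu).1⟩

end Twisted

end CoxeterSystem

open CoxeterSystem

theorem restricted_weyl_group_coset_decomposition_general
    {I : Type} {W : Type} [Group W] {M : CoxeterMatrix I} (cs : CoxeterSystem M W)
    (X : Set I) (τ : Equiv.Perm I) (φ : W ≃* W)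
    (hφs : ∀ i, φ (cs.simple i) = cs.simple (τ i))
    (wX : W) (hwXmem : wX ∈ Subgroup.closure (cs.simple '' X)) (hwX2 : wX * wX = 1)
    (hlong : ∀ u ∈ Subgroup.closure (cs.simple '' X), cs.length u ≤ cs.length wX)
    (hoi : ∀ i ∈ X, wX * cs.simple i * wX = cs.simple (τ i)) :
    -- (W^X)^σ = 𝒲^τ :
    (∀ w : W, (∀ j ∈ X, cs.length w < cs.length (cs.simple j * w)) →
      (wX * w = φ w * wX ↔
        ((∀ u ∈ Subgroup.closure (cs.simple '' X),
            w * u * w⁻¹ ∈ Subgroup.closure (cs.simple '' X) ∧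
            w⁻¹ * u * w ∈ Subgroup.closure (cs.simple '' X)) ∧ φ w = w)))
    ∧
    -- W^σ = W_X · 𝒲^τ :
    (∀ w : W, wX * w = φ w * wX ↔
      ∃ u ∈ Subgroup.closure (cs.simple '' X), ∃ v : W,
        (∀ j ∈ X, cs.length v < cs.length (cs.simple j * v)) ∧
        (∀ u' ∈ Subgroup.closure (cs.simple '' X),
            v * u' * v⁻¹ ∈ Subgroup.closure (cs.simple '' X) ∧
            v⁻¹ * u' * v ∈ Subgroup.closure (cs.simple '' X)) ∧
        φ v = v ∧ w = u * v)
    ∧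
    -- W_X ∩ 𝒲^τ = {1} :
    (∀ v ∈ Subgroup.closure (cs.simple '' X),
      (∀ j ∈ X, cs.length v < cs.length (cs.simple j * v)) →
      (∀ u' ∈ Subgroup.closure (cs.simple '' X),
          v * u' * v⁻¹ ∈ Subgroup.closure (cs.simple '' X) ∧
          v⁻¹ * u' * v ∈ Subgroup.closure (cs.simple '' X)) →
      φ v = v → v = 1) := by
  have hP := cs.closure_le_twistedCentralizer X hφs hwX2 hoi
  have fixed_iff (w : W) (hD : ∀ j ∈ X, cs.length w < cs.length (cs.simple j * w)) :=
    cs.mem_twistedCentralizer_iff X hφs hP hwXmem hlong hD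
  refine ⟨fixed_iff, fun w => ⟨fun hw => ?_, ?_⟩, ?_⟩
  · obtain ⟨u, hu, hmin⟩ := cs.exists_mem_closure_forall_length_le X w
    have hD (j : I) (hj : j ∈ X) := cs.lt_length_simple_mul_of_forall_length_le X
      (fun p hp => by simpa [mul_assoc] using hmin _ (mul_mem hp hu)) hj
    obtain ⟨hnorm, hφ⟩ := (fixed_iff _ hD).mp (mul_mem (hP hu) hw)
    exact ⟨u⁻¹, inv_mem hu, u * w, hD, hnorm, hφ, by group⟩
  · rintro ⟨u, hu, v, hD, hnorm, hφ, rfl⟩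
    exact mul_mem (hP hu) ((fixed_iff v hD).mpr ⟨hnorm, hφ⟩)
  · intro v hv hD _ _
    have := cs.length_mul_of_forall_lt_length_simple_mul X hD (inv_mem hv)
    rw [inv_mul_cancel, length_one, length_inv] at this
    exact cs.length_eq_zero_iff.mp (by omega)

/-- Let `(W, {sᵢ})` be a Coxeter system with simple reflections `cs.simple i`, and let
`(X, τ)` be a compatible decoration: `τ` is an involutive permutation of `I` stabilizing `X`,
realized on `W` by the automorphism `φ` with `φ (sᵢ) = s_{τ i}`; `W_X` (the parabolic subgroup
generated by `{s j : j ∈ X}`) is finite with longest element `w_X`, and `τ|_X` is the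
opposition involution of `X`, i.e. `w_X s_i w_X = s_{τ i}` for `i ∈ X`.

Write `W^σ = {w : w_X w = φ(w) w_X}`, `W^X = {w : ℓ(s_j w) > ℓ(w) ∀ j ∈ X}` (minimal-length
coset representatives), and `𝒲 = N_{W^X}(W_X)`.  Then `(W^X)^σ = 𝒲^τ`, and in particular
`W^σ = W_X · 𝒲^τ` with `W_X ∩ 𝒲^τ = {1}`. -/
theorem restricted_weyl_group_coset_decomposition
    {I : Type} {W : Type} [Group W] {M : CoxeterMatrix I} (cs : CoxeterSystem M W)
    (X : Set I) (τ : Equiv.Perm I) (φ : W ≃* W)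
    (hφs : ∀ i, φ (cs.simple i) = cs.simple (τ i))
    (hτ2 : ∀ i, τ (τ i) = i) (hτX : ∀ i ∈ X, τ i ∈ X)
    (hfin : Set.Finite ((Subgroup.closure (cs.simple '' X) : Subgroup W) : Set W))
    (wX : W) (hwXmem : wX ∈ Subgroup.closure (cs.simple '' X)) (hwX2 : wX * wX = 1)
    (hlong : ∀ u ∈ Subgroup.closure (cs.simple '' X), cs.length u ≤ cs.length wX)
    (hoi : ∀ i ∈ X, wX * cs.simple i * wX = cs.simple (τ i)) :
    -- (W^X)^σ = 𝒲^τ :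
    (∀ w : W, (∀ j ∈ X, cs.length w < cs.length (cs.simple j * w)) →
      (wX * w = φ w * wX ↔
        ((∀ u ∈ Subgroup.closure (cs.simple '' X),
            w * u * w⁻¹ ∈ Subgroup.closure (cs.simple '' X) ∧
            w⁻¹ * u * w ∈ Subgroup.closure (cs.simple '' X)) ∧ φ w = w)))
    ∧
    -- W^σ = W_X · 𝒲^τ :
    (∀ w : W, wX * w = φ w * wX ↔
      ∃ u ∈ Subgroup.closure (cs.simple '' X), ∃ v : W,
        (∀ j ∈ X, cs.length v < cs.length (cs.simple j * v)) ∧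
        (∀ u' ∈ Subgroup.closure (cs.simple '' X),
            v * u' * v⁻¹ ∈ Subgroup.closure (cs.simple '' X) ∧
            v⁻¹ * u' * v ∈ Subgroup.closure (cs.simple '' X)) ∧
        φ v = v ∧ w = u * v)
    ∧
    -- W_X ∩ 𝒲^τ = {1} :
    (∀ v ∈ Subgroup.closure (cs.simple '' X),
      (∀ j ∈ X, cs.length v < cs.length (cs.simple j * v)) →
      (∀ u' ∈ Subgroup.closure (cs.simple '' X),
          v * u' * v⁻¹ ∈ Subgroup.closure (cs.simple '' X) ∧
          v⁻¹ * u' * v ∈ Subgroup.closure (cs.simple '' X)) →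
      φ v = v → v = 1) :=
  restricted_weyl_group_coset_decomposition_general cs X τ φ hφs wX hwXmem hwX2 hlong hoi
end
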